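/- arXiv:1401.5909 — 12 statements merged into one kernel-verified Lean document; each statement's English description precedes it below -/
import Mathlib

section
/- Let A, B, C be a triangle and D the midpoint of segment BC. If ∠DAC + ∠ABC = π/2, then dist A C = dist A B or ∠BAC = π/2. -/
/-!
Write `u = B - A`, `v = C - A`, so that `D - A = (u + v) / 2` and the angle at `B` is the angle
between `-u` and `v - u`. Since the two angles add up to `π / 2`, the cosine of each is the sine of
the other, so the product of the inner products `⟪u + v, v⟫ ⟪-u, v - u⟫` equals the product of the
corresponding "sine times norms" terms. The latter are square roots of Gram determinants, and both
Gram determinants equal that of `u, v` (twice the area of triangle `ABC`). Expanding,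
`(⟪u, v⟫ + ‖v‖²)(‖u‖² - ⟪u, v⟫) = ‖u‖²‖v‖² - ⟪u, v⟫²`, i.e. `⟪u, v⟫ (‖u‖² - ‖v‖²) = 0`.
-/

open EuclideanGeometry Real

open scoped RealInnerProductSpace

namespace InnerProductGeometry

variable {V : Type*} [NormedAddCommGroup V] [InnerProductSpace ℝ V]

theorem inner_mul_inner_of_angle_add_angle_eq_pi_div_two {x y z w : V}
    (h : angle x y + angle z w = π / 2) :
    ⟪x, y⟫ * ⟪z, w⟫ =
      √(⟪x, x⟫ * ⟪y, y⟫ - ⟪x, y⟫ * ⟪x, y⟫) * √(⟪z, z⟫ * ⟪w, w⟫ - ⟪z, w⟫ * ⟪z, w⟫) := by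
  rw [← sin_angle_mul_norm_mul_norm, ← sin_angle_mul_norm_mul_norm,
    ← cos_angle_mul_norm_mul_norm x y, ← cos_angle_mul_norm_mul_norm z w,
    show angle x y = π / 2 - angle z w by linarith, cos_pi_div_two_sub, sin_pi_div_two_sub]
  ring

theorem inner_eq_zero_or_norm_eq_of_angle_add_angle_eq_pi_div_two {u v : V}
    (h : angle (u + v) v + angle (-u) (v - u) = π / 2) : ⟪u, v⟫ = 0 ∨ ‖u‖ = ‖v‖ := by
  have key := inner_mul_inner_of_angle_add_angle_eq_pi_div_two h
  have hvu : ⟪v, u⟫ = ⟪u, v⟫ := real_inner_comm u v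
  have hgram₁ : ⟪u + v, u + v⟫ * ⟪v, v⟫ - ⟪u + v, v⟫ * ⟪u + v, v⟫ =
      ⟪u, u⟫ * ⟪v, v⟫ - ⟪u, v⟫ * ⟪u, v⟫ := by
    simp only [inner_add_left, inner_add_right, hvu]
    ring
  have hgram₂ : ⟪-u, -u⟫ * ⟪v - u, v - u⟫ - ⟪-u, v - u⟫ * ⟪-u, v - u⟫ =
      ⟪u, u⟫ * ⟪v, v⟫ - ⟪u, v⟫ * ⟪u, v⟫ := by
    simp only [inner_neg_left, inner_neg_right, inner_sub_left, inner_sub_right, hvu]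
    ring
  have hgram_nonneg : 0 ≤ ⟪u, u⟫ * ⟪v, v⟫ - ⟪u, v⟫ * ⟪u, v⟫ :=
    sub_nonneg.2 (real_inner_mul_inner_self_le u v)
  rw [hgram₁, hgram₂, mul_self_sqrt hgram_nonneg] at key
  simp only [inner_add_left, inner_neg_left, inner_sub_right, real_inner_self_eq_norm_sq] at key
  have hprod : ⟪u, v⟫ * (‖u‖ ^ 2 - ‖v‖ ^ 2) = 0 := by linear_combination key
  exact (mul_eq_zero.1 hprod).imp_right fun hsq =>
    (sq_eq_sq₀ (norm_nonneg u) (norm_nonneg v)).1 (sub_eq_zero.1 hsq)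

end InnerProductGeometry

namespace EuclideanGeometry

variable {V P : Type*} [NormedAddCommGroup V] [InnerProductSpace ℝ V] [MetricSpace P]
  [NormedAddTorsor V P]

theorem dist_eq_or_angle_eq_pi_div_two_of_angle_midpoint_add_angle_eq_pi_div_two {A B C : P}
    (h : ∠ (midpoint ℝ B C) A C + ∠ A B C = π / 2) :
    dist A C = dist A B ∨ ∠ B A C = π / 2 := by
  have hmid : midpoint ℝ B C -ᵥ A = (2⁻¹ : ℝ) • ((B -ᵥ A) + (C -ᵥ A)) := by
    rw [midpoint_vsub, smul_add, invOf_eq_inv]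
  rw [angle, angle, hmid, InnerProductGeometry.angle_smul_left_of_pos _ _ (by norm_num),
    ← neg_vsub_eq_vsub_rev B A, ← vsub_sub_vsub_cancel_right C B A] at h
  rcases InnerProductGeometry.inner_eq_zero_or_norm_eq_of_angle_add_angle_eq_pi_div_two h with
    hinner | hnorm
  · exact .inr ((InnerProductGeometry.inner_eq_zero_iff_angle_eq_pi_div_two _ _).1 hinner)
  · exact .inl (by rw [dist_eq_norm_vsub', dist_eq_norm_vsub', hnorm])

end EuclideanGeometry

theorem stmt_4_general (A B C D : EuclideanSpace ℝ (Fin 2))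
    (hD : D = midpoint ℝ B C)
    (h : ∠ D A C + ∠ A B C = π / 2) :
    dist A C = dist A B ∨ ∠ B A C = π / 2 := by
  subst hD
  exact dist_eq_or_angle_eq_pi_div_two_of_angle_midpoint_add_angle_eq_pi_div_two h

theorem stmt_4 (A B C D : EuclideanSpace ℝ (Fin 2))
    (hABC : ¬ Collinear ℝ ({A, B, C} : Set (EuclideanSpace ℝ (Fin 2))))
    (hD : D = midpoint ℝ B C)
    (h : ∠ D A C + ∠ A B C = π / 2) :
    dist A C = dist A B ∨ ∠ B A C = π / 2 :=
  stmt_4_general A B C D hD h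
end

section
/- Let A, B, C be a triangle and D the midpoint of segment BC. If ∠DAC + ∠ABC = π/2 and ∠BAC ≠ π/2, then dist A C = dist A B. -/
open EuclideanGeometry Real

theorem stmt_5 (A B C D : EuclideanSpace ℝ (Fin 2))
    (hABC : ¬ Collinear ℝ ({A, B, C} : Set (EuclideanSpace ℝ (Fin 2))))
    (hD : D = midpoint ℝ B C)
    (h : ∠ D A C + ∠ A B C = π / 2)
    (h2 : ∠ B A C ≠ π / 2) :
    dist A C = dist A B := by
  have hAB : A ≠ B := ne₁₂_of_not_collinear hABC
  have hAC : A ≠ C := ne₁₃_of_not_collinear hABC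
  have hBC : B ≠ C := ne₂₃_of_not_collinear hABC
  have hAD : A ≠ D := by
    intro hA
    apply hABC
    have hmem : midpoint ℝ B C ∈ line[ℝ, B, C] := by
      rw [← lineMap_inv_two]
      exact AffineMap.lineMap_mem_affineSpan_pair _ _ _
    have : Collinear ℝ ({midpoint ℝ B C, B, C} : Set (EuclideanSpace ℝ (Fin 2))) :=
      collinear_insert_of_mem_affineSpan_pair hmem
    rwa [hA, hD]
  set a := dist B C with ha
  set b := dist A C with hb
  set c := dist A B with hc
  set d := dist A D with hd
  have hbpos : 0 < b := dist_pos.mpr hAC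
  have hcpos : 0 < c := dist_pos.mpr hAB
  have hapos : 0 < a := dist_pos.mpr hBC
  have hdpos : 0 < d := dist_pos.mpr hAD
  set cb := Real.cos (∠ A B C) with hcb
  set cd := Real.cos (∠ D A C) with hcd
  have hsinB : 0 < Real.sin (∠ A B C) := sin_pos_of_not_collinear hABC
  have hDAC : ∠ D A C = π / 2 - ∠ A B C := by linarith
  have hcd_eq : cd = Real.sin (∠ A B C) := by
    rw [hcd, hDAC, Real.cos_pi_div_two_sub]
  have hcdpos : 0 < cd := hcd_eq ▸ hsinB
  have hcbnonneg : 0 ≤ cb := by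
    apply Real.cos_nonneg_of_mem_Icc
    constructor
    · have := EuclideanGeometry.angle_nonneg A B C
      have := pi_pos
      linarith
    · have := EuclideanGeometry.angle_nonneg D A C
      linarith
  have hsq : cd ^ 2 = 1 - cb ^ 2 := by
    have := Real.sin_sq_add_cos_sq (∠ A B C)
    rw [hcd_eq]
    linarith
  -- law of cosines at B
  have lawB := EuclideanGeometry.law_cos A B C
  rw [dist_comm C B] at lawB
  rw [← ha, ← hb, ← hc, ← hcb] at lawB
  have hU : 2 * c * a * cb = c ^ 2 + a ^ 2 - b ^ 2 := by
    linear_combination lawB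
  -- law of cosines at A for triangle D A C
  have lawD := EuclideanGeometry.law_cos D A C
  have hDC : dist D C = a / 2 := by
    rw [hD, dist_midpoint_right, Real.norm_two]
    ring
  rw [hDC, dist_comm D A, dist_comm C A] at lawD
  rw [← hb, ← hd, ← hcd] at lawD
  -- Apollonius
  have hAp := EuclideanGeometry.dist_sq_add_dist_sq_eq_two_mul_dist_midpoint_sq_add_half_dist_sq
    A B C
  rw [← hD] at hAp
  rw [← ha, ← hb, ← hc, ← hd] at hAp
  have hd4 : 4 * d ^ 2 = 2 * b ^ 2 + 2 * c ^ 2 - a ^ 2 := by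
    linear_combination -2 * hAp
  have hV : 4 * d * b * cd = 3 * b ^ 2 + c ^ 2 - a ^ 2 := by
    linear_combination 2 * lawD + (1 / 2) * hd4
  have hHeq : 4 * c ^ 2 * a ^ 2 - (c ^ 2 + a ^ 2 - b ^ 2) ^ 2 = (2 * c * a * cd) ^ 2 := by
    linear_combination (2 * c * a * cb + (c ^ 2 + a ^ 2 - b ^ 2)) * hU
      + (-(4 * c ^ 2 * a ^ 2)) * hsq
  have hHpos : 0 < 4 * c ^ 2 * a ^ 2 - (c ^ 2 + a ^ 2 - b ^ 2) ^ 2 := by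
    rw [hHeq]
    exact pow_pos (mul_pos (mul_pos (mul_pos two_pos hcpos) hapos) hcdpos) 2
  have hu : 0 ≤ c ^ 2 + a ^ 2 - b ^ 2 := by
    rw [← hU]
    exact mul_nonneg (mul_nonneg (mul_nonneg (by norm_num) hcpos.le) hapos.le) hcbnonneg
  have hv : 0 ≤ 3 * b ^ 2 + c ^ 2 - a ^ 2 := by
    rw [← hV]
    exact mul_nonneg (mul_nonneg (mul_nonneg (by norm_num) hdpos.le) hbpos.le) hcdpos.le
  -- b^2 + c^2 - a^2 ≠ 0 from ∠BAC ≠ π/2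
  have hcosA : Real.cos (∠ B A C) ≠ 0 := by
    intro h0
    apply h2
    apply Real.injOn_cos ⟨EuclideanGeometry.angle_nonneg B A C, EuclideanGeometry.angle_le_pi B A C⟩
      ⟨by linarith [pi_pos], by linarith [pi_pos]⟩
    rw [h0, Real.cos_pi_div_two]
  have lawA := EuclideanGeometry.law_cos B A C
  rw [dist_comm B A, dist_comm C A] at lawA
  rw [← ha, ← hb, ← hc] at lawA
  have hbc2 : b ^ 2 + c ^ 2 - a ^ 2 ≠ 0 := by
    have heq : b ^ 2 + c ^ 2 - a ^ 2 = 2 * c * b * Real.cos (∠ B A C) := by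
      linear_combination -lawA
    rw [heq]
    exact mul_ne_zero (mul_ne_zero (mul_ne_zero two_ne_zero hcpos.ne') hbpos.ne') hcosA
  -- key polynomial identity
  have hkey : ((b ^ 2 - c ^ 2) * (b ^ 2 + c ^ 2 - a ^ 2)) ^ 2 =
      ((b ^ 2 - c ^ 2) * (b ^ 2 + c ^ 2 - a ^ 2)) *
        (4 * c ^ 2 * a ^ 2 - (c ^ 2 + a ^ 2 - b ^ 2) ^ 2) := by
    linear_combination (-(c ^ 2 * a ^ 2) * (4 * d * b * cd + 3 * b ^ 2 + c ^ 2 - a ^ 2)) * hV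
      + (-(4 * b ^ 2 * d ^ 2) * (2 * c * a * cb + (c ^ 2 + a ^ 2 - b ^ 2))) * hU
      + (16 * b ^ 2 * d ^ 2 * c ^ 2 * a ^ 2) * hsq
      + (b ^ 2 * (4 * c ^ 2 * a ^ 2 - (c ^ 2 + a ^ 2 - b ^ 2) ^ 2)) * hd4
  have hfac : ((b ^ 2 - c ^ 2) * (b ^ 2 + c ^ 2 - a ^ 2)) *
      (((b ^ 2 - c ^ 2) * (b ^ 2 + c ^ 2 - a ^ 2)) -
        (4 * c ^ 2 * a ^ 2 - (c ^ 2 + a ^ 2 - b ^ 2) ^ 2)) = 0 := by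
    linear_combination hkey
  rcases mul_eq_zero.mp hfac with h0 | h1
  · rcases mul_eq_zero.mp h0 with h3 | h4
    · have hbc : (b - c) * (b + c) = 0 := by linear_combination h3
      rcases mul_eq_zero.mp hbc with h5 | h6
      · linarith
      · linarith
    · exact absurd h4 hbc2
  · exfalso
    have huv : (c ^ 2 + a ^ 2 - b ^ 2) * (3 * b ^ 2 + c ^ 2 - a ^ 2) =
        (4 * c ^ 2 * a ^ 2 - (c ^ 2 + a ^ 2 - b ^ 2) ^ 2) -
          2 * ((b ^ 2 - c ^ 2) * (b ^ 2 + c ^ 2 - a ^ 2)) := by ring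
    have h5 : (c ^ 2 + a ^ 2 - b ^ 2) * (3 * b ^ 2 + c ^ 2 - a ^ 2) =
        -(4 * c ^ 2 * a ^ 2 - (c ^ 2 + a ^ 2 - b ^ 2) ^ 2) := by
      linear_combination -2 * h1
    linarith [mul_nonneg hu hv, hHpos, h5]
end

section
/- Let A, B, C be a triangle and D the midpoint of segment BC. If ∠DAC + ∠ABC = π/2 and dist A C ≠ dist A B, then ∠BAC = π/2. -/
open EuclideanGeometry Real InnerProductGeometry
open scoped RealInnerProductSpace

set_option maxHeartbeats 1000000 in
theorem stmt_6 (A B C D : EuclideanSpace ℝ (Fin 2))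
    (hABC : ¬ Collinear ℝ ({A, B, C} : Set (EuclideanSpace ℝ (Fin 2))))
    (hD : D = midpoint ℝ B C)
    (h : ∠ D A C + ∠ A B C = π / 2)
    (h2 : dist A C ≠ dist A B) :
    ∠ B A C = π / 2 := by
  classical
  set x := B -ᵥ A with hx
  set y := C -ᵥ A with hy
  set s : ℝ := ⟪x, x⟫ with hs
  set t : ℝ := ⟪x, y⟫ with ht
  set u : ℝ := ⟪y, y⟫ with hu
  have hDA : (D -ᵥ A) = ((2:ℝ)⁻¹) • x + ((2:ℝ)⁻¹) • y := by
    rw [hD, midpoint_vsub, ← hx, ← hy]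
    norm_num
  have hAB : (A -ᵥ B) = -x := by rw [hx, neg_vsub_eq_vsub_rev]
  have hCB : (C -ᵥ B) = y - x := (vsub_sub_vsub_cancel_right C B A).symm
  have i1 : ⟪D -ᵥ A, C -ᵥ A⟫ = (t + u) / 2 := by
    simp only [hDA, ← hy, inner_add_left, real_inner_smul_left, ← ht, ← hu]
    ring
  have hyx : ⟪y, x⟫ = t := by rw [ht]; exact real_inner_comm x y
  have i2 : ⟪D -ᵥ A, D -ᵥ A⟫ = (s + 2*t + u) / 4 := by
    simp only [hDA, inner_add_left, inner_add_right, real_inner_smul_left,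
      real_inner_smul_right, hyx, ← hs, ← ht, ← hu]
    ring
  have i3 : ⟪A -ᵥ B, C -ᵥ B⟫ = s - t := by
    simp only [hAB, hCB, inner_neg_left, inner_sub_right, ← hs, ← ht]
    ring
  have i4 : ⟪A -ᵥ B, A -ᵥ B⟫ = s := by
    simp only [hAB, inner_neg_left, inner_neg_right, ← hs]
    ring
  have i5 : ⟪C -ᵥ B, C -ᵥ B⟫ = s - 2*t + u := by
    simp only [hCB, inner_sub_left, inner_sub_right, hyx, ← hs, ← ht, ← hu]
    ring
  have hcs : t * t ≤ s * u := by
    have := real_inner_mul_inner_self_le x y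
    rw [← hs, ← ht, ← hu] at this
    linarith
  have hc : Real.cos (∠ D A C) * Real.cos (∠ A B C)
      - Real.sin (∠ D A C) * Real.sin (∠ A B C) = 0 := by
    rw [← Real.cos_add, h, Real.cos_pi_div_two]
  have hα : ∠ D A C = InnerProductGeometry.angle (D -ᵥ A) (C -ᵥ A) := rfl
  have hβ : ∠ A B C = InnerProductGeometry.angle (A -ᵥ B) (C -ᵥ B) := rfl
  have cα := cos_angle_mul_norm_mul_norm (D -ᵥ A) (C -ᵥ A)
  have cβ := cos_angle_mul_norm_mul_norm (A -ᵥ B) (C -ᵥ B)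
  have sα := sin_angle_mul_norm_mul_norm (D -ᵥ A) (C -ᵥ A)
  have sβ := sin_angle_mul_norm_mul_norm (A -ᵥ B) (C -ᵥ B)
  rw [← hα] at cα sα
  rw [← hβ] at cβ sβ
  have key : ⟪D -ᵥ A, C -ᵥ A⟫ * ⟪A -ᵥ B, C -ᵥ B⟫ =
      Real.sqrt (⟪D -ᵥ A, D -ᵥ A⟫ * ⟪C -ᵥ A, C -ᵥ A⟫ - ⟪D -ᵥ A, C -ᵥ A⟫ * ⟪D -ᵥ A, C -ᵥ A⟫)
      * Real.sqrt (⟪A -ᵥ B, A -ᵥ B⟫ * ⟪C -ᵥ B, C -ᵥ B⟫ - ⟪A -ᵥ B, C -ᵥ B⟫ * ⟪A -ᵥ B, C -ᵥ B⟫) := by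
    rw [← sα, ← sβ, ← cα, ← cβ]
    linear_combination (‖D -ᵥ A‖ * ‖C -ᵥ A‖ * (‖A -ᵥ B‖ * ‖C -ᵥ B‖)) * hc
  have iyy : ⟪C -ᵥ A, C -ᵥ A⟫ = u := by rw [← hy]
  rw [i1, i2, i3, i4, i5, iyy] at key
  have e1 : (s + 2*t + u)/4 * u - (t+u)/2 * ((t+u)/2) = (s*u - t*t)/4 := by ring
  have e2 : s * (s - 2*t + u) - (s-t)*(s-t) = s*u - t*t := by ring
  rw [e1, e2] at key
  have hsqrt : Real.sqrt ((s*u - t*t)/4) * Real.sqrt (s*u - t*t) = (s*u - t*t)/2 := by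
    rw [← Real.sqrt_mul (by linarith)]
    have e3 : (s*u - t*t)/4 * (s*u - t*t) = ((s*u - t*t)/2)^2 := by ring
    rw [e3, Real.sqrt_sq (by linarith)]
  rw [hsqrt] at key
  have htsu : t * (s - u) = 0 := by nlinarith [key]
  have hsu : s ≠ u := by
    intro hse
    apply h2
    have h1 : dist A C = ‖y‖ := by
      rw [dist_comm, dist_eq_norm_vsub (EuclideanSpace ℝ (Fin 2)), ← hy]
    have h3 : dist A B = ‖x‖ := by
      rw [dist_comm, dist_eq_norm_vsub (EuclideanSpace ℝ (Fin 2)), ← hx]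
    rw [h1, h3]
    have hsq : ‖y‖^2 = ‖x‖^2 := by
      rw [← real_inner_self_eq_norm_sq, ← real_inner_self_eq_norm_sq, ← hs, ← hu, hse]
    have := congrArg Real.sqrt hsq
    rwa [Real.sqrt_sq (norm_nonneg y), Real.sqrt_sq (norm_nonneg x)] at this
  have ht0 : t = 0 := by
    rcases mul_eq_zero.mp htsu with h' | h'
    · exact h'
    · exact absurd (by linarith : s = u) hsu
  exact (inner_eq_zero_iff_angle_eq_pi_div_two x y).mp ht0
end

section
/- Let A, B, C be a triangle, A₁ the point strictly between B and C with ∠BAA₁ = ∠A₁AC, B₁ the point strictly between A and C with ∠ABB₁ = ∠B₁BC, and J a point lying on both segment AA₁ and segment BB₁. If dist A C = dist B C, then dist J A₁ = dist J B₁. -/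
/-!
Since `CA = CB`, the reflection `σ` in the perpendicular bisector of `AB` fixes `C` and swaps
`A` and `B`. It carries the bisector `AA₁` to a cevian from `B` bisecting the angle at `B`, and
in the plane the foot of that bisector is unique, so `σ A₁ = B₁`. Hence `σ` swaps the two
cevians and fixes their unique common point `J`, so `dist J A₁ = dist (σ J) (σ A₁) = dist J B₁`.
-/

open EuclideanGeometry Real AffineSubspace

variable {V P : Type*} [NormedAddCommGroup V] [InnerProductSpace ℝ V] [MetricSpace P]
  [NormedAddTorsor V P]

lemma notMem_affineSpan_pair_of_not_collinear {A B C : P}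
    (hABC : ¬ Collinear ℝ ({A, B, C} : Set P)) : A ∉ line[ℝ, B, C] :=
  fun hA => hABC (collinear_insert_of_mem_affineSpan_pair hA)

lemma notMem_affineSpan_cevian {A B C A₁ : P} (hABC : ¬ Collinear ℝ ({A, B, C} : Set P))
    (hA₁ : A₁ ∈ line[ℝ, B, C]) (hA₁B : A₁ ≠ B) : B ∉ line[ℝ, A, A₁] := by
  intro hB
  have hA : A ∈ line[ℝ, B, A₁] :=
    (collinear_insert_of_mem_affineSpan_pair hB).mem_affineSpan_of_mem_of_ne
      (by simp) (by simp) (by simp) hA₁B.symm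
  exact notMem_affineSpan_pair_of_not_collinear hABC
    (affineSpan_pair_le_of_mem_of_mem (left_mem_affineSpan_pair ℝ B C) hA₁ hA)

lemma eq_of_mem_affineSpan_pair_of_notMem {A A₁ B B₁ J J' : P} (hB : B ∉ line[ℝ, A, A₁])
    (hJA : J ∈ line[ℝ, A, A₁]) (hJ'A : J' ∈ line[ℝ, A, A₁])
    (hJB : J ∈ line[ℝ, B, B₁]) (hJ'B : J' ∈ line[ℝ, B, B₁]) : J = J' := by
  by_contra hne
  have hBJ : B ∈ line[ℝ, J, J'] :=
    (collinear_insert_insert_of_mem_affineSpan_pair hJB hJ'B).mem_affineSpan_of_mem_of_ne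
      (by simp) (by simp) (by simp) hne
  exact hB (affineSpan_pair_le_of_mem_of_mem hJA hJ'A hBJ)

instance (A B : P) : Nonempty (perpBisector A B) :=
  ⟨⟨midpoint ℝ A B, midpoint_mem_perpBisector A B⟩⟩

lemma reflection_perpBisector_left (A B : P)
    [(perpBisector A B).direction.HasOrthogonalProjection] :
    reflection (perpBisector A B) A = B := by
  have hA : A -ᵥ midpoint ℝ A B ∈ (perpBisector A B).directionᗮ := by
    rw [direction_perpBisector, Submodule.orthogonal_orthogonal, left_vsub_midpoint,
      ← neg_vsub_eq_vsub_rev B A, smul_neg]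
    exact neg_mem (Submodule.smul_mem _ _ (Submodule.mem_span_singleton_self _))
  rw [reflection_apply_of_mem _ A (midpoint_mem_perpBisector A B),
    Submodule.reflection_mem_subspace_orthogonalComplement_eq_neg hA, neg_vsub_eq_vsub_rev,
    midpoint_vsub_left, ← right_vsub_midpoint, vsub_vadd]

lemma reflection_perpBisector_right (A B : P)
    [(perpBisector A B).direction.HasOrthogonalProjection] :
    reflection (perpBisector A B) B = A := by
  have h := reflection_reflection (perpBisector A B) A
  rwa [reflection_perpBisector_left] at h

section Plane

variable [Fact (Module.finrank ℝ V = 2)]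

attribute [local instance] FiniteDimensional.of_fact_finrank_eq_two

lemma two_zsmul_oangle_of_angle_eq [Module.Oriented ℝ V (Fin 2)] {A B C X : P}
    (hABC : ¬ Collinear ℝ ({A, B, C} : Set P)) (hX : Sbtw ℝ B X C) (hXA : ∠ B A X = ∠ X A C) :
    (2 : ℤ) • ∡ B A X = ∡ B A C := by
  have hXA' : X ≠ A := fun h =>
    notMem_affineSpan_pair_of_not_collinear hABC (h ▸ hX.wbtw.mem_affineSpan)
  rw [two_zsmul, ← oangle_add (ne₁₂_of_not_collinear hABC).symm hXA'
    (ne₁₃_of_not_collinear hABC).symm]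
  congr 1
  exact oangle_eq_of_angle_eq_of_sign_eq hXA (hX.oangle_sign_eq A)

lemma eq_of_sbtw_of_angle_eq_of_angle_eq {A B C X Y : P}
    (hABC : ¬ Collinear ℝ ({A, B, C} : Set P)) (hX : Sbtw ℝ B X C) (hXA : ∠ B A X = ∠ X A C)
    (hY : Sbtw ℝ B Y C) (hYA : ∠ B A Y = ∠ Y A C) : X = Y := by
  have : Module.Oriented ℝ V (Fin 2) := ⟨(Module.finBasisOfFinrankEq ℝ V Fact.out).orientation⟩
  have hA := notMem_affineSpan_pair_of_not_collinear hABC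
  have hXA' : X ≠ A := fun h => hA (h ▸ hX.wbtw.mem_affineSpan)
  have hYA' : Y ≠ A := fun h => hA (h ▸ hY.wbtw.mem_affineSpan)
  have hsign : (∡ B A X).sign ≠ 0 := by
    rw [hX.oangle_sign_eq_left, Ne, oangle_sign_eq_zero_iff_collinear, Set.insert_comm]
    exact hABC
  have hBAXY : ∡ B A X = ∡ B A Y := by
    rw [← Real.Angle.two_zsmul_eq_iff_eq hsign
        (by rw [hX.oangle_sign_eq_left, hY.oangle_sign_eq_left]),
      two_zsmul_oangle_of_angle_eq hABC hX hXA, two_zsmul_oangle_of_angle_eq hABC hY hYA]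
  have hXAY : Collinear ℝ ({X, A, Y} : Set P) := by
    rw [← oangle_eq_zero_or_eq_pi_iff_collinear,
      ← oangle_sub_left (ne₁₂_of_not_collinear hABC).symm hXA' hYA', hBAXY, sub_self]
    exact Or.inl rfl
  by_contra hne
  exact hA (affineSpan_pair_le_of_mem_of_mem hX.wbtw.mem_affineSpan hY.wbtw.mem_affineSpan
    (hXAY.mem_affineSpan_of_mem_of_ne (by simp) (by simp) (by simp) hne))

lemma reflection_perpBisector_eq_of_dist_eq {A B C A₁ B₁ : P}
    (hABC : ¬ Collinear ℝ ({A, B, C} : Set P)) (h : dist A C = dist B C)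
    (hA₁ : Sbtw ℝ B A₁ C) (hA₁' : ∠ B A A₁ = ∠ A₁ A C)
    (hB₁ : Sbtw ℝ A B₁ C) (hB₁' : ∠ A B B₁ = ∠ B₁ B C) :
    reflection (perpBisector A B) A₁ = B₁ := by
  set σ := reflection (perpBisector A B)
  have hσA : σ A = B := reflection_perpBisector_left A B
  have hσB : σ B = A := reflection_perpBisector_right A B
  have hσC : σ C = C := (reflection_eq_self_iff C).2 (mem_perpBisector_iff_dist_eq'.2 h)
  have hBAC : ¬ Collinear ℝ ({B, A, C} : Set P) := by rwa [Set.insert_comm]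
  refine eq_of_sbtw_of_angle_eq_of_angle_eq hBAC ?_ ?_ hB₁ hB₁'
  · simpa [hσB, hσC] using σ.toAffineEquiv.sbtw_map_iff.2 hA₁
  · have hangle := (σ.toAffineIsometry.angle_map B A A₁).trans
      (hA₁'.trans (σ.toAffineIsometry.angle_map A₁ A C).symm)
    simpa only [AffineIsometryEquiv.coe_toAffineIsometry, hσA, hσB, hσC] using hangle

end Plane

theorem stmt_7 (A B C A₁ B₁ J : EuclideanSpace ℝ (Fin 2))
    (hABC : ¬ Collinear ℝ ({A, B, C} : Set (EuclideanSpace ℝ (Fin 2))))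
    (hA₁ : Sbtw ℝ B A₁ C) (hA₁' : ∠ B A A₁ = ∠ A₁ A C)
    (hB₁ : Sbtw ℝ A B₁ C) (hB₁' : ∠ A B B₁ = ∠ B₁ B C)
    (hJA : J ∈ segment ℝ A A₁) (hJB : J ∈ segment ℝ B B₁)
    (h : dist A C = dist B C) :
    dist J A₁ = dist J B₁ := by
  have : Fact (Module.finrank ℝ (EuclideanSpace ℝ (Fin 2)) = 2) := ⟨finrank_euclideanSpace_fin⟩
  set σ := reflection (perpBisector A B)
  have hσA₁ : σ A₁ = B₁ := reflection_perpBisector_eq_of_dist_eq hABC h hA₁ hA₁' hB₁ hB₁'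
  have hσB₁ : σ B₁ = A₁ := by rw [← hσA₁, reflection_reflection]
  have hσA : σ A = B := reflection_perpBisector_left A B
  have hσB : σ B = A := reflection_perpBisector_right A B
  have hJA := mem_segment_iff_wbtw.1 hJA
  have hJB := mem_segment_iff_wbtw.1 hJB
  have hσJ : σ J = J := by
    refine eq_of_mem_affineSpan_pair_of_notMem
      (notMem_affineSpan_cevian hABC hA₁.wbtw.mem_affineSpan hA₁.ne_left)
      ?_ hJA.mem_affineSpan ?_ hJB.mem_affineSpan
    · simpa [hσB, hσB₁] using
        (σ.toAffineEquiv.wbtw_map_iff.2 hJB).mem_affineSpan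
    · simpa [hσA, hσA₁] using
        (σ.toAffineEquiv.wbtw_map_iff.2 hJA).mem_affineSpan
  calc dist J A₁ = dist (σ J) (σ A₁) := (σ.dist_map J A₁).symm
    _ = dist J B₁ := by rw [hσJ, hσA₁]
end

section
/- Let A, B, C be a triangle, A₁ the point strictly between B and C with ∠BAA₁ = ∠A₁AC, B₁ the point strictly between A and C with ∠ABB₁ = ∠B₁BC, and J a point lying on both segment AA₁ and segment BB₁. If ∠ACB = π/3, then dist J A₁ = dist J B₁. -/
/-! The bisectors split the angles at `A` and `B` into halves `α` and `β`, and the angle sum gives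
`2α + 2β + π/3 = π`, so `α + β = π/3`. By the exterior angle theorem `∠ B A₁ A = π/3 + α` and
`∠ A B₁ B = π/3 + β`; these add up to `π`, so they have the same sine. The law of sines in the
triangles `A₁BJ`, `ABJ` and `B₁AJ` then reads
`sin (π/3 + α) * JA₁ = sin β * JB = sin α * JA = sin (π/3 + β) * JB₁`. -/

open EuclideanGeometry Real

section Affine

variable {V P : Type*} [AddCommGroup V] [Module ℝ V] [AddTorsor V P]

theorem sbtw_of_wbtw_of_wbtw_cevian {A B C A₁ B₁ J : P}
    (hABC : ¬Collinear ℝ ({A, B, C} : Set P)) (hA₁ : Sbtw ℝ B A₁ C) (hB₁ : Sbtw ℝ A B₁ C)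
    (hJA : Wbtw ℝ A J A₁) (hJB : Wbtw ℝ B J B₁) : Sbtw ℝ A J A₁ := by
  refine ⟨hJA, ?_, ?_⟩
  · rintro rfl
    have hB : B ∈ line[ℝ, J, B₁] := by
      rw [AffineSubspace.affineSpan_pair_comm]
      exact hJB.left_mem_affineSpan_of_right_ne hB₁.ne_left
    exact hABC (collinear_triple_of_mem_affineSpan_pair (left_mem_affineSpan_pair ℝ J B₁) hB
      (hB₁.wbtw.right_mem_affineSpan_of_left_ne hB₁.ne_left.symm))
  · rintro rfl
    have hCB₁ : line[ℝ, C, B₁] ≤ line[ℝ, B, J] := affineSpan_pair_le_of_mem_of_mem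
      (hA₁.wbtw.right_mem_affineSpan_of_left_ne hA₁.ne_left.symm)
      (hJB.right_mem_affineSpan_of_left_ne hA₁.ne_left.symm)
    exact hABC (collinear_triple_of_mem_affineSpan_pair
      (hCB₁ (hB₁.wbtw.left_mem_affineSpan_of_right_ne hB₁.ne_right.symm))
      (left_mem_affineSpan_pair ℝ B J) (hCB₁ (left_mem_affineSpan_pair ℝ C B₁)))

end Affine

section Euclidean

variable {V P : Type*} [NormedAddCommGroup V] [InnerProductSpace ℝ V] [MetricSpace P]
  [NormedAddTorsor V P]

theorem sin_angle_add_angle_mul_dist_of_wbtw {A B C A₁ J : P} (hA₁ : Sbtw ℝ B A₁ C)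
    (hJ : Wbtw ℝ A J A₁) (hJA₁ : J ≠ A₁) :
    sin (∠ A C B + ∠ A₁ A C) * dist J A₁ = sin (∠ C B J) * dist J B := by
  have hext : ∠ B A₁ J = ∠ A C B + ∠ A₁ A C := by
    rw [hJ.symm.angle_eq_right B hJA₁, angle_comm, exterior_angle_eq_angle_add_angle B hA₁,
      hA₁.symm.angle_eq_right A, add_comm]
  rw [← hext, dist_comm J A₁, law_sin B A₁ J, hA₁.angle_eq_right J, angle_comm]

end Euclidean

theorem stmt_8 (A B C A₁ B₁ J : EuclideanSpace ℝ (Fin 2))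
    (hABC : ¬ Collinear ℝ ({A, B, C} : Set (EuclideanSpace ℝ (Fin 2))))
    (hA₁ : Sbtw ℝ B A₁ C) (hA₁' : ∠ B A A₁ = ∠ A₁ A C)
    (hB₁ : Sbtw ℝ A B₁ C) (hB₁' : ∠ A B B₁ = ∠ B₁ B C)
    (hJA : J ∈ segment ℝ A A₁) (hJB : J ∈ segment ℝ B B₁)
    (h : ∠ A C B = π / 3) :
    dist J A₁ = dist J B₁ := by
  rw [mem_segment_iff_wbtw] at hJA hJB
  have hJA₁ := sbtw_of_wbtw_of_wbtw_cevian hABC hA₁ hB₁ hJA hJB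
  have hJB₁ := sbtw_of_wbtw_of_wbtw_cevian (by rwa [Set.insert_comm]) hB₁ hA₁ hJB hJA
  have hα : ∠ B A A₁ + ∠ A₁ A C = ∠ B A C := angle_add_angle_eq_of_sbtw hA₁
  have hβ : ∠ A B B₁ + ∠ B₁ B C = ∠ A B C := angle_add_angle_eq_of_sbtw hB₁
  have hsum : ∠ B A A₁ + ∠ A B B₁ = π / 3 := by
    linarith [angle_add_angle_add_angle_eq_pi C (ne₁₂_of_not_collinear hABC).symm,
      angle_comm B C A, angle_comm C A B]
  have e₁ := sin_angle_add_angle_mul_dist_of_wbtw hA₁ hJA hJA₁.ne_right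
  have e₂ := sin_angle_add_angle_mul_dist_of_wbtw hB₁ hJB hJB₁.ne_right
  have e₃ := law_sin B A J
  rw [hJB₁.angle_eq_right, angle_comm C B B₁, ← hB₁', ← hA₁', h] at e₁
  rw [hJA₁.angle_eq_right, angle_comm C A A₁, ← hA₁', ← hB₁', angle_comm B C A, h] at e₂
  rw [hJA₁.angle_eq_right, angle_comm J B A, hJB₁.angle_eq_right, dist_comm A J] at e₃
  have hsin : sin (π / 3 + ∠ A B B₁) = sin (π / 3 + ∠ B A A₁) := by
    rw [← sin_pi_sub]; congr 1; linarith
  have hpos : 0 < sin (π / 3 + ∠ B A A₁) := by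
    apply sin_pos_of_pos_of_lt_pi <;>
      linarith [angle_nonneg B A A₁, angle_nonneg A B B₁, pi_pos]
  refine mul_left_cancel₀ hpos.ne' ?_
  rw [e₁, ← hsin, e₂, e₃]
end

section
/- Let A, B, C be a triangle, A₁ the point strictly between B and C with ∠BAA₁ = ∠A₁AC, B₁ the point strictly between A and C with ∠ABB₁ = ∠B₁BC, and J a point lying on both segment AA₁ and segment BB₁. If dist J A₁ = dist J B₁, then dist A C = dist B C or ∠ACB = π/3. -/
open EuclideanGeometry Real

/-! With `α = ∠BAC`, `β = ∠ABC`, the bisector foot `A₁` sees `AB` under `∠BA₁A = π - β - α/2`,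
and `∠BJA₁ = (α + β)/2`. Two applications of the law of sines give
`sin ∠BA₁A · sin ((α + β)/2) · JA₁ = sin (α/2) · sin (β/2) · AB`, and symmetrically for `JB₁`.
So `JA₁ = JB₁` forces `sin ∠BA₁A = sin ∠AB₁B`: either the two angles are equal, whence `α = β`,
or they are supplementary, whence `α + β = 2π/3`. -/

theorem eq_or_add_eq_pi_of_sin_eq {x y : ℝ} (hx₀ : 0 < x) (hxπ : x < π) (hy₀ : 0 < y)
    (hyπ : y < π) (h : sin x = sin y) : x = y ∨ x + y = π := by
  have hcos : (cos x - cos y) * (cos x + cos y) = 0 := by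
    linear_combination sin_sq_add_cos_sq x - sin_sq_add_cos_sq y - (sin x + sin y) * h
  rcases mul_eq_zero.1 hcos with hc | hc
  · exact .inl <| injOn_cos ⟨hx₀.le, hxπ.le⟩ ⟨hy₀.le, hyπ.le⟩ (by linarith)
  · have hc' : cos x = cos (π - y) := by rw [cos_pi_sub]; linarith
    have := injOn_cos ⟨hx₀.le, hxπ.le⟩ ⟨by linarith, by linarith⟩ hc'
    exact .inr (by linarith)

namespace EuclideanGeometry

variable {V P : Type*} [NormedAddCommGroup V] [InnerProductSpace ℝ V] [MetricSpace P]
  [NormedAddTorsor V P]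

theorem sin_angle_mul_sin_angle_mul_dist_eq (A B A₁ J : P) :
    sin (∠ B A₁ A) * sin (∠ B J A₁) * dist J A₁ =
      sin (∠ A₁ A B) * sin (∠ A₁ B J) * dist A B := by
  have hA₁AB := law_sin A₁ A B
  rw [dist_comm B A₁] at hA₁AB
  linear_combination sin (∠ B A₁ A) * law_sin B J A₁ - sin (∠ A₁ B J) * hA₁AB

variable {A B C A₁ : P}

theorem angle_add_angle_lt_pi_of_not_collinear (h : ¬ Collinear ℝ ({A, B, C} : Set P)) :
    ∠ B A C + ∠ A B C < π := by
  have hγ := angle_pos_of_not_collinear (p₁ := A) (p₂ := C) (p₃ := B) (by rwa [Set.pair_comm])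
  linarith [angle_add_angle_add_angle_eq_pi C (ne₁₂_of_not_collinear h).symm, angle_comm B C A,
    angle_comm C A B]

theorem angle_eq_half_of_bisector (hA₁ : Sbtw ℝ B A₁ C) (h : ∠ B A A₁ = ∠ A₁ A C) :
    ∠ B A A₁ = ∠ B A C / 2 := by
  linarith [angle_add_angle_eq_of_sbtw (p := A) hA₁]

theorem angle_at_foot_of_bisector (hAB : A ≠ B) (hA₁ : Sbtw ℝ B A₁ C)
    (h : ∠ B A A₁ = ∠ A₁ A C) : ∠ B A₁ A = π - ∠ A B C - ∠ B A C / 2 := by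
  have hsum := angle_add_angle_add_angle_eq_pi A₁ hAB.symm
  rw [hA₁.wbtw.angle_eq_right A hA₁.ne_left, angle_comm A₁ A B,
    angle_eq_half_of_bisector hA₁ h] at hsum
  linarith

theorem sin_mul_sin_mul_dist_eq_of_bisectors {B₁ J : P}
    (hABC : ¬ Collinear ℝ ({A, B, C} : Set P))
    (hA₁ : Sbtw ℝ B A₁ C) (hA₁' : ∠ B A A₁ = ∠ A₁ A C)
    (hB₁ : Sbtw ℝ A B₁ C) (hB₁' : ∠ A B B₁ = ∠ B₁ B C)
    (hJA : Wbtw ℝ A J A₁) (hJB : Wbtw ℝ B J B₁) :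
    sin (∠ B A₁ A) * sin ((∠ B A C + ∠ A B C) / 2) * dist J A₁ =
      sin (∠ B A C / 2) * sin (∠ A B C / 2) * dist A B := by
  have hAB : A ≠ B := ne₁₂_of_not_collinear hABC
  have hα : 0 < ∠ B A C := angle_pos_of_not_collinear (by rwa [Set.insert_comm])
  have hβ : 0 < ∠ A B C := angle_pos_of_not_collinear hABC
  have hαA₁ := angle_eq_half_of_bisector hA₁ hA₁'
  have hβB₁ := angle_eq_half_of_bisector hB₁ hB₁'
  have hJB_ne : J ≠ B := by
    rintro rfl
    linarith [hJA.angle₂₁₃_eq_zero_of_ne hAB.symm]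
  have hβJ : ∠ A₁ B J = ∠ A B C / 2 := by
    rw [hA₁.wbtw.angle_eq_left J hA₁.ne_left, hJB.angle_eq_right C hJB_ne, angle_comm, ← hB₁',
      hβB₁]
  have hJA₁_ne : J ≠ A₁ := by
    rintro rfl
    linarith [angle_self_of_ne hA₁.ne_left]
  have hφ : ∠ B J A₁ = (∠ B A C + ∠ A B C) / 2 := by
    have hsum := angle_add_angle_add_angle_eq_pi A₁ hJB_ne
    rw [hβJ, angle_comm J A₁ B, hJA.symm.angle_eq_right B hJA₁_ne,
      angle_at_foot_of_bisector hAB hA₁ hA₁'] at hsum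
    linarith
  rw [← hφ, sin_angle_mul_sin_angle_mul_dist_eq, angle_comm, hαA₁, hβJ]

theorem sin_angle_eq_sin_angle_of_dist_eq {B₁ J : P}
    (hABC : ¬ Collinear ℝ ({A, B, C} : Set P))
    (hA₁ : Sbtw ℝ B A₁ C) (hA₁' : ∠ B A A₁ = ∠ A₁ A C)
    (hB₁ : Sbtw ℝ A B₁ C) (hB₁' : ∠ A B B₁ = ∠ B₁ B C)
    (hJA : Wbtw ℝ A J A₁) (hJB : Wbtw ℝ B J B₁) (h : dist J A₁ = dist J B₁) :
    sin (∠ B A₁ A) = sin (∠ A B₁ B) := by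
  have hBAC : ¬ Collinear ℝ ({B, A, C} : Set P) := by rwa [Set.insert_comm]
  have hAB : A ≠ B := ne₁₂_of_not_collinear hABC
  have hα := angle_pos_of_not_collinear hBAC
  have hβ := angle_pos_of_not_collinear hABC
  have hαβ := angle_add_angle_lt_pi_of_not_collinear hABC
  have hJA₁ := sin_mul_sin_mul_dist_eq_of_bisectors hABC hA₁ hA₁' hB₁ hB₁' hJA hJB
  have hJB₁ := sin_mul_sin_mul_dist_eq_of_bisectors hBAC hB₁ hB₁' hA₁ hA₁' hJB hJA
  rw [add_comm, ← h, dist_comm B A] at hJB₁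
  have hK : 0 < sin (∠ B A C / 2) * sin (∠ A B C / 2) * dist A B := by
    have := dist_pos.2 hAB
    have := sin_pos_of_pos_of_lt_pi (x := ∠ B A C / 2) (by linarith) (by linarith)
    have := sin_pos_of_pos_of_lt_pi (x := ∠ A B C / 2) (by linarith) (by linarith)
    positivity
  refine mul_right_cancel₀ (b := sin ((∠ B A C + ∠ A B C) / 2) * dist J A₁) ?_ ?_
  · exact fun h0 => hK.ne' (by rw [← hJA₁, mul_assoc, h0, mul_zero])
  · linear_combination hJA₁ - hJB₁

theorem dist_eq_or_angle_eq_pi_div_three_of_sin_angle_eq {B₁ : P}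
    (hABC : ¬ Collinear ℝ ({A, B, C} : Set P))
    (hA₁ : Sbtw ℝ B A₁ C) (hA₁' : ∠ B A A₁ = ∠ A₁ A C)
    (hB₁ : Sbtw ℝ A B₁ C) (hB₁' : ∠ A B B₁ = ∠ B₁ B C)
    (hsin : sin (∠ B A₁ A) = sin (∠ A B₁ B)) :
    dist A C = dist B C ∨ ∠ A C B = π / 3 := by
  have hACB : ¬ Collinear ℝ ({A, C, B} : Set P) := by rwa [Set.pair_comm]
  have hAB : A ≠ B := ne₁₂_of_not_collinear hABC
  have hα := angle_pos_of_not_collinear (p₁ := B) (p₂ := A) (p₃ := C) (by rwa [Set.insert_comm])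
  have hβ := angle_pos_of_not_collinear hABC
  have hαβ := angle_add_angle_lt_pi_of_not_collinear hABC
  have hsum : ∠ B A C + ∠ A B C + ∠ A C B = π := by
    linarith [angle_add_angle_add_angle_eq_pi C hAB.symm, angle_comm B C A, angle_comm C A B]
  have hx := angle_at_foot_of_bisector hAB hA₁ hA₁'
  have hy := angle_at_foot_of_bisector hAB.symm hB₁ hB₁'
  rcases eq_or_add_eq_pi_of_sin_eq (by linarith) (by linarith) (by linarith) (by linarith) hsin
    with hxy | hxy
  · left
    rw [dist_comm A C, dist_comm B C]
    refine dist_eq_of_angle_eq_angle_of_angle_ne_pi ?_ (angle_lt_pi_of_not_collinear hACB).ne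
    rw [angle_comm C A B, angle_comm C B A]
    linarith
  · right
    linarith

end EuclideanGeometry

theorem stmt_9 (A B C A₁ B₁ J : EuclideanSpace ℝ (Fin 2))
    (hABC : ¬ Collinear ℝ ({A, B, C} : Set (EuclideanSpace ℝ (Fin 2))))
    (hA₁ : Sbtw ℝ B A₁ C) (hA₁' : ∠ B A A₁ = ∠ A₁ A C)
    (hB₁ : Sbtw ℝ A B₁ C) (hB₁' : ∠ A B B₁ = ∠ B₁ B C)
    (hJA : J ∈ segment ℝ A A₁) (hJB : J ∈ segment ℝ B B₁)
    (h : dist J A₁ = dist J B₁) :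
    dist A C = dist B C ∨ ∠ A C B = π / 3 := by
  have hsin := sin_angle_eq_sin_angle_of_dist_eq hABC hA₁ hA₁' hB₁ hB₁'
    (mem_segment_iff_wbtw.1 hJA) (mem_segment_iff_wbtw.1 hJB) h
  exact dist_eq_or_angle_eq_pi_div_three_of_sin_angle_eq hABC hA₁ hA₁' hB₁ hB₁' hsin
end

section
/- Let A, B, C be a triangle, A₁ the point strictly between B and C with ∠BAA₁ = ∠A₁AC, B₁ the point strictly between A and C with ∠ABB₁ = ∠B₁BC, and J a point lying on both segment AA₁ and segment BB₁. If dist J A₁ = dist J B₁ and dist A C ≠ dist B C, then ∠ACB = π/3. -/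
open EuclideanGeometry Real

/-! With `a = ∠ B A A₁` and `b = ∠ A B B₁` the triangle has angles `2a`, `2b` and
`∠ A C B = π - 2a - 2b`. The law of sines in the triangles `J B A₁`, `J A B₁` and `J A B` gives
`JA₁ · sin (a + 2b) = JB · sin b`, `JB₁ · sin (2a + b) = JA · sin a` and `JB · sin b = JA · sin a`,
so `JA₁ = JB₁` forces `sin (a + 2b) = sin (2a + b)`. Hence either `a = b`, and the triangle is
isosceles with `CA = CB`, or `3 (a + b) = π`, that is `∠ A C B = π / 3`. -/

theorem Real.eq_or_add_eq_pi_of_sin_eq_sin {x y : ℝ} (hx₀ : 0 < x) (hx : x < π) (hy₀ : 0 < y)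
    (hy : y < π) (h : sin x = sin y) : x = y ∨ x + y = π := by
  have hprod : sin ((x - y) / 2) * cos ((x + y) / 2) = 0 := by
    linarith [sin_sub_sin x y]
  rcases mul_eq_zero.1 hprod with hsin | hcos
  · left
    have := (sin_eq_zero_iff_of_lt_of_lt (by linarith) (by linarith)).1 hsin
    linarith
  · right
    have := injOn_cos ⟨by linarith, by linarith⟩ ⟨by positivity, by linarith⟩
      (hcos.trans cos_pi_div_two.symm)
    linarith

section Affine

variable {k V P : Type*} [DivisionRing k] [AddCommGroup V] [Module k V] [AddTorsor V P]

theorem Collinear.mem_affineSpan_pair_of_mem_of_mem {s : Set P} (h : Collinear k s)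
    {p₁ p₂ x q₁ q₂ : P} (hp₁ : p₁ ∈ s) (hp₂ : p₂ ∈ s) (hx : x ∈ s) (hne : p₁ ≠ p₂)
    (hq₁ : p₁ ∈ line[k, q₁, q₂]) (hq₂ : p₂ ∈ line[k, q₁, q₂]) : x ∈ line[k, q₁, q₂] :=
  affineSpan_pair_le_of_mem_of_mem hq₁ hq₂ (h.mem_affineSpan_of_mem_of_ne hp₁ hp₂ hx hne)

end Affine

section Cevian

variable {V P : Type*} [AddCommGroup V] [Module ℝ V] [AddTorsor V P]

theorem sbtw_of_wbtw_cevians {A B C A₁ B₁ J : P}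
    (hABC : ¬ Collinear ℝ ({A, B, C} : Set P)) (hA₁ : Sbtw ℝ B A₁ C) (hB₁ : Sbtw ℝ A B₁ C)
    (hJA : Wbtw ℝ A J A₁) (hJB : Wbtw ℝ B J B₁) : Sbtw ℝ A J A₁ := by
  refine ⟨hJA, ?_, ?_⟩
  · rintro rfl
    have hB : B ∈ line[ℝ, J, C] :=
      hJB.collinear.mem_affineSpan_pair_of_mem_of_mem (by simp) (by simp) (by simp)
        hB₁.ne_left.symm (left_mem_affineSpan_pair _ _ _) hB₁.wbtw.mem_affineSpan
    exact hABC (by simpa [Set.insert_comm] using collinear_insert_of_mem_affineSpan_pair hB)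
  · rintro rfl
    have hB₁BC : B₁ ∈ line[ℝ, B, C] :=
      hJB.collinear.mem_affineSpan_pair_of_mem_of_mem (by simp) (by simp) (by simp)
        hA₁.ne_left.symm (left_mem_affineSpan_pair _ _ _) hA₁.wbtw.mem_affineSpan
    have hA : A ∈ line[ℝ, B, C] :=
      hB₁.wbtw.collinear.mem_affineSpan_pair_of_mem_of_mem (by simp) (by simp) (by simp)
        hB₁.ne_right hB₁BC (right_mem_affineSpan_pair _ _ _)
    exact hABC (collinear_insert_of_mem_affineSpan_pair hA)

end Cevian

section Euclidean

variable {V P : Type*} [NormedAddCommGroup V] [InnerProductSpace ℝ V] [MetricSpace P]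
  [NormedAddTorsor V P]

theorem angle_eq_two_mul_of_sbtw_of_angle_eq {A B C A₁ : P} (hA₁ : Sbtw ℝ B A₁ C)
    (h : ∠ B A A₁ = ∠ A₁ A C) : ∠ B A C = 2 * ∠ B A A₁ := by
  rw [← angle_add_angle_eq_of_sbtw hA₁, ← h, two_mul]

theorem sin_angle_add_two_mul_angle_mul_dist {A B C A₁ B₁ J : P} (hAB : A ≠ B)
    (hA₁ : Sbtw ℝ B A₁ C) (hB₁ : Sbtw ℝ A B₁ C) (hB₁' : ∠ A B B₁ = ∠ B₁ B C)
    (hJA : Sbtw ℝ A J A₁) (hJB : Sbtw ℝ B J B₁) :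
    sin (∠ B A A₁ + 2 * ∠ A B B₁) * dist J A₁ = sin (∠ A B B₁) * dist J B := by
  have hsum := angle_add_angle_add_angle_eq_pi A₁ hAB.symm
  rw [hA₁.angle_eq_right, angle_eq_two_mul_of_sbtw_of_angle_eq hB₁ hB₁', angle_comm A₁ A B]
    at hsum
  have hfoot : ∠ B A₁ J = π - (∠ B A A₁ + 2 * ∠ A B B₁) := by
    rw [hJA.symm.angle_eq_right]; linarith
  have hJBA₁ : ∠ J B A₁ = ∠ A B B₁ := by
    rw [hJB.angle_eq_left, hA₁.angle_eq_right, hB₁']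
  have hsine := law_sin B A₁ J
  rwa [hfoot, sin_pi_sub, hJBA₁, dist_comm A₁ J] at hsine

theorem sin_angle_add_two_mul_angle_eq_of_dist_eq {A B C A₁ B₁ J : P} (hAB : A ≠ B)
    (hA₁ : Sbtw ℝ B A₁ C) (hA₁' : ∠ B A A₁ = ∠ A₁ A C)
    (hB₁ : Sbtw ℝ A B₁ C) (hB₁' : ∠ A B B₁ = ∠ B₁ B C)
    (hJA : Sbtw ℝ A J A₁) (hJB : Sbtw ℝ B J B₁) (h : dist J A₁ = dist J B₁) :
    sin (∠ B A A₁ + 2 * ∠ A B B₁) = sin (∠ A B B₁ + 2 * ∠ B A A₁) := by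
  have hsinA := sin_angle_add_two_mul_angle_mul_dist hAB hA₁ hB₁ hB₁' hJA hJB
  have hsinB := sin_angle_add_two_mul_angle_mul_dist hAB.symm hB₁ hA₁ hA₁' hJB hJA
  have hAJB := law_sin A B J
  rw [hJB.angle_eq_right, hJA.angle_eq_left, angle_comm A₁ A B] at hAJB
  have hJA₁ : dist J A₁ ≠ 0 := dist_ne_zero.2 hJA.ne_right
  apply mul_right_cancel₀ hJA₁
  rw [hsinA, ← dist_comm B J, hAJB, h, hsinB, dist_comm]

end Euclidean

theorem stmt_10 (A B C A₁ B₁ J : EuclideanSpace ℝ (Fin 2))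
    (hABC : ¬ Collinear ℝ ({A, B, C} : Set (EuclideanSpace ℝ (Fin 2))))
    (hA₁ : Sbtw ℝ B A₁ C) (hA₁' : ∠ B A A₁ = ∠ A₁ A C)
    (hB₁ : Sbtw ℝ A B₁ C) (hB₁' : ∠ A B B₁ = ∠ B₁ B C)
    (hJA : J ∈ segment ℝ A A₁) (hJB : J ∈ segment ℝ B B₁)
    (h : dist J A₁ = dist J B₁)
    (h2 : dist A C ≠ dist B C) :
    ∠ A C B = π / 3 := by
  have hBAC : ¬ Collinear ℝ ({B, A, C} : Set (EuclideanSpace ℝ (Fin 2))) := by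
    rwa [Set.insert_comm]
  have hACB : ¬ Collinear ℝ ({A, C, B} : Set (EuclideanSpace ℝ (Fin 2))) := by
    rwa [Set.pair_comm]
  have hAB : A ≠ B := ne₁₂_of_not_collinear hABC
  rw [mem_segment_iff_wbtw] at hJA hJB
  have hJA' := sbtw_of_wbtw_cevians hABC hA₁ hB₁ hJA hJB
  have hJB' := sbtw_of_wbtw_cevians hBAC hB₁ hA₁ hJB hJA
  have hangleA := angle_eq_two_mul_of_sbtw_of_angle_eq hA₁ hA₁'
  have hangleB := angle_eq_two_mul_of_sbtw_of_angle_eq hB₁ hB₁'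
  have hsum := angle_add_angle_add_angle_eq_pi C hAB.symm
  rw [angle_comm B C A, angle_comm C A B] at hsum
  have hA₀ := angle_pos_of_not_collinear hBAC
  have hB₀ := angle_pos_of_not_collinear hABC
  have hC₀ := angle_pos_of_not_collinear hACB
  rcases Real.eq_or_add_eq_pi_of_sin_eq_sin (by linarith) (by linarith) (by linarith)
      (by linarith) (sin_angle_add_two_mul_angle_eq_of_dist_eq hAB hA₁ hA₁' hB₁ hB₁' hJA' hJB' h)
    with hab | hab
  · refine absurd ?_ h2
    rw [dist_comm A C, dist_comm B C]
    refine dist_eq_of_angle_eq_angle_of_angle_ne_pi ?_ (angle_lt_pi_of_not_collinear hACB).ne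
    rw [angle_comm C A B, angle_comm C B A]
    linarith
  · linarith
end

section
/- Let A, B, C be a triangle, H the orthogonal projection of C onto the line AB (the foot of the altitude from C), and M the midpoint of segment AB. If ∠ACB = π/2, then ∠ACM = ∠BCH and ∠ACH = ∠BCM. -/
open EuclideanGeometry Real

local notation "⟪" x ", " y "⟫" => @inner ℝ _ _ x y

lemma aux_angle {E : Type*} [NormedAddCommGroup E] [InnerProductSpace ℝ E]
    (u v : E) (hu : u ≠ 0) (hv : v ≠ 0) (huv : ⟪u, v⟫ = 0) :
    InnerProductGeometry.angle u (u + v)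
      = InnerProductGeometry.angle v ((‖v‖ ^ 2) • u + (‖u‖ ^ 2) • v) := by
  have ha : (0:ℝ) < ‖u‖ := norm_pos_iff.mpr hu
  have hb : (0:ℝ) < ‖v‖ := norm_pos_iff.mpr hv
  set a := ‖u‖ with ha'
  set b := ‖v‖ with hb'
  have hS : (0:ℝ) < a ^ 2 + b ^ 2 := by positivity
  set s := Real.sqrt (a ^ 2 + b ^ 2) with hs'
  have hs : (0:ℝ) < s := Real.sqrt_pos.mpr hS
  have hs2 : s ^ 2 = a ^ 2 + b ^ 2 := Real.sq_sqrt hS.le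
  have hvu : ⟪v, u⟫ = 0 := by rwa [real_inner_comm]
  have huu : ⟪u, u⟫ = a ^ 2 := real_inner_self_eq_norm_sq u
  have hvv : ⟪v, v⟫ = b ^ 2 := real_inner_self_eq_norm_sq v
  -- norms
  have hn1 : ‖u + v‖ = s := by
    rw [← Real.sqrt_sq (norm_nonneg (u + v)), hs']
    congr 1
    rw [norm_add_sq_real]
    rw [← ha', ← hb'] at *
    rw [huv]; ring
  have hn2 : ‖(b ^ 2) • u + (a ^ 2) • v‖ = a * b * s := by
    have h1 : ‖(b ^ 2) • u + (a ^ 2) • v‖ ^ 2 = (a * b * s) ^ 2 := by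
      rw [norm_add_sq_real, inner_smul_left, inner_smul_right, huv, norm_smul, norm_smul]
      simp only [Real.norm_eq_abs, abs_of_nonneg (sq_nonneg a), abs_of_nonneg (sq_nonneg b)]
      rw [← ha', ← hb']
      nlinarith [hs2]
    have := Real.sqrt_sq (norm_nonneg ((b ^ 2) • u + (a ^ 2) • v))
    rw [← this, h1, Real.sqrt_sq (by positivity)]
  -- cosines
  have hc1 : Real.cos (InnerProductGeometry.angle u (u + v)) = a / s := by
    rw [InnerProductGeometry.cos_angle, inner_add_right, huu, huv, hn1, ← ha']
    field_simp
    ring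
  have hc2 : Real.cos (InnerProductGeometry.angle v ((‖v‖ ^ 2) • u + (‖u‖ ^ 2) • v))
      = a / s := by
    rw [InnerProductGeometry.cos_angle, inner_add_right, inner_smul_right, inner_smul_right,
      hvu, hvv, hn2, ← ha', ← hb']
    field_simp
    ring
  refine Real.injOn_cos ⟨InnerProductGeometry.angle_nonneg _ _,
      InnerProductGeometry.angle_le_pi _ _⟩
    ⟨InnerProductGeometry.angle_nonneg _ _, InnerProductGeometry.angle_le_pi _ _⟩ ?_
  rw [hc1, hc2]

theorem stmt_13 (A B C H M : EuclideanSpace ℝ (Fin 2))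
    (hABC : ¬ Collinear ℝ ({A, B, C} : Set (EuclideanSpace ℝ (Fin 2))))
    (hH : H = EuclideanGeometry.orthogonalProjection (affineSpan ℝ {A, B}) C)
    (hM : M = midpoint ℝ A B)
    (h : ∠ A C B = π / 2) :
    ∠ A C M = ∠ B C H ∧ ∠ A C H = ∠ B C M := by
  set u := A -ᵥ C with hu'
  set v := B -ᵥ C with hv'
  have hAC : A ≠ C := by
    rintro rfl
    exact hABC (Collinear.subset (by intro x hx; simp at hx ⊢; tauto)
      (collinear_pair ℝ A B : Collinear ℝ {A, B}))
  have hBC : B ≠ C := by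
    rintro rfl
    exact hABC (Collinear.subset (by intro x hx; simp at hx ⊢; tauto)
      (collinear_pair ℝ A B : Collinear ℝ {A, B}))
  have hu : u ≠ 0 := fun hc => hAC (by rwa [hu', vsub_eq_zero_iff_eq] at hc)
  have hv : v ≠ 0 := fun hc => hBC (by rwa [hv', vsub_eq_zero_iff_eq] at hc)
  have huv : ⟪u, v⟫ = 0 :=
    (InnerProductGeometry.inner_eq_zero_iff_angle_eq_pi_div_two u v).2 h
  have hvu : ⟪v, u⟫ = 0 := by rwa [real_inner_comm]
  have huu : ⟪u, u⟫ = ‖u‖ ^ 2 := real_inner_self_eq_norm_sq u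
  have hvv : ⟪v, v⟫ = ‖v‖ ^ 2 := real_inner_self_eq_norm_sq v
  set S : ℝ := ‖u‖ ^ 2 + ‖v‖ ^ 2 with hS'
  have hS : (0:ℝ) < S := by
    have := norm_pos_iff.mpr hu
    positivity
  -- the midpoint vector
  have hMv : M -ᵥ C = (2⁻¹:ℝ) • (u + v) := by
    rw [hM, midpoint_vsub, hu', hv']
    simp [smul_add]
  -- the foot of the altitude
  have hHmem : H ∈ affineSpan ℝ ({A, B} : Set (EuclideanSpace ℝ (Fin 2))) := by
    rw [hH]; exact EuclideanGeometry.orthogonalProjection_mem C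
  obtain ⟨r, hr⟩ := (mem_vectorSpan_pair_rev (k := ℝ) (p₁ := A) (p₂ := B)).mp
    (by rw [← direction_affineSpan]
        exact AffineSubspace.vsub_mem_direction hHmem (left_mem_affineSpan_pair ℝ A B))
  -- hr : r • (B -ᵥ A) = H -ᵥ A
  have hperp : C -ᵥ H ∈ (affineSpan ℝ ({A, B} : Set (EuclideanSpace ℝ (Fin 2)))).directionᗮ := by
    rw [hH]
    exact EuclideanGeometry.vsub_orthogonalProjection_mem_direction_orthogonal _ C
  have hinner : ⟪B -ᵥ A, C -ᵥ H⟫ = 0 := by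
    refine hperp (B -ᵥ A) ?_
    rw [direction_affineSpan]
    exact vsub_mem_vectorSpan ℝ (Set.mem_insert_of_mem _ rfl) (Set.mem_insert _ _)
  have hBA : B -ᵥ A = v - u := by rw [hu', hv', vsub_sub_vsub_cancel_right]
  have hCH : C -ᵥ H = -u - r • (v - u) := by
    have : H -ᵥ A = r • (v - u) := by rw [← hBA, hr]
    have h2 : H -ᵥ C = u + r • (v - u) := by
      rw [show H -ᵥ C = (H -ᵥ A) + (A -ᵥ C) by rw [vsub_add_vsub_cancel], this, hu']
      abel
    rw [← neg_vsub_eq_vsub_rev, h2]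
    abel
  have hrS : r * S = ‖u‖ ^ 2 := by
    rw [hBA, hCH] at hinner
    simp only [inner_sub_left, inner_sub_right, inner_neg_right, real_inner_smul_right,
      huv, hvu, huu, hvv] at hinner
    rw [hS']
    nlinarith [hinner]
  have hHv : S • (H -ᵥ C) = (‖v‖ ^ 2) • u + (‖u‖ ^ 2) • v := by
    have h2 : H -ᵥ C = u + r • (v - u) := by
      rw [show H -ᵥ C = -(C -ᵥ H) by rw [neg_vsub_eq_vsub_rev], hCH]
      abel
    have hc : S - ‖u‖ ^ 2 = ‖v‖ ^ 2 := by rw [hS']; ring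
    calc S • (H -ᵥ C) = (S - r * S) • u + (r * S) • v := by rw [h2]; module
      _ = (‖v‖ ^ 2) • u + (‖u‖ ^ 2) • v := by rw [hrS, hc]
  -- angles
  have e1 : ∠ A C M = InnerProductGeometry.angle u (u + v) := by
    rw [EuclideanGeometry.angle, hMv, ← hu']
    exact InnerProductGeometry.angle_smul_right_of_pos _ _ (by norm_num)
  have e2 : ∠ B C H = InnerProductGeometry.angle v ((‖v‖ ^ 2) • u + (‖u‖ ^ 2) • v) := by
    rw [EuclideanGeometry.angle, ← hv', ← hHv]
    exact (InnerProductGeometry.angle_smul_right_of_pos _ _ hS).symm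
  have e3 : ∠ B C M = InnerProductGeometry.angle v (v + u) := by
    rw [EuclideanGeometry.angle, hMv, ← hv', add_comm u v]
    exact InnerProductGeometry.angle_smul_right_of_pos _ _ (by norm_num)
  have e4 : ∠ A C H = InnerProductGeometry.angle u ((‖u‖ ^ 2) • v + (‖v‖ ^ 2) • u) := by
    rw [EuclideanGeometry.angle, ← hu', ← add_comm ((‖v‖ ^ 2) • u), ← hHv]
    exact (InnerProductGeometry.angle_smul_right_of_pos _ _ hS).symm
  constructor
  · rw [e1, e2]
    exact aux_angle u v hu hv huv
  · rw [e3, e4]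
    exact (aux_angle v u hv hu hvu).symm
end

section
/- Let A, B, C be a triangle with ∠CAB ≥ ∠CBA, H the orthogonal projection of C onto the line AB (the foot of the altitude from C), and M the midpoint of segment AB. If ∠ACM = ∠BCH, then dist A C = dist B C or ∠ACB = π/2. -/
open EuclideanGeometry Real RealInnerProductSpace

lemma alg14 (p sa sb sc sm sw : ℝ)
    (hsa0 : 0 < sa) (hsb0 : 0 < sb) (hsc0 : 0 < sc) (hsm0 : 0 < sm) (hsw0 : 0 < sw)
    (hsm : sm^2 = (sa^2 + sb^2 + 2*p)/4)
    (hsw : sw^2 * sc^2 = sa^2*sb^2 - p^2)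
    (hsc : sc^2 = sa^2 + sb^2 - 2*p)
    (hab : (sa^2 - p)/(sa*sc) ≤ (sb^2 - p)/(sb*sc))
    (heq : ((sa^2+p)/2) / (sa*sm) = sw^2 / (sb*sw)) :
    sa = sb ∨ p = 0 := by
  have hD : 0 < sa^2*sb^2 - p^2 := by nlinarith [mul_pos (mul_pos hsw0 hsw0) (mul_pos hsc0 hsc0)]
  -- hab implies sa ≤ sb
  have hab' : sa ≤ sb := by
    by_contra hlt
    push_neg at hlt
    have h1 : (sa^2 - p) * (sb*sc) ≤ (sb^2 - p) * (sa*sc) :=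
      (div_le_div_iff₀ (by positivity) (by positivity)).mp hab
    have h2 : (sa^2 - p) * sb ≤ (sb^2 - p) * sa :=
      le_of_mul_le_mul_right (by nlinarith [h1]) hsc0
    have key : (sa - sb) * (sa*sb + p) ≤ 0 := by nlinarith [h2]
    have h4 : sa*sb + p ≤ 0 := by
      by_contra hpos
      push_neg at hpos
      nlinarith [mul_pos (sub_pos.2 hlt) hpos]
    nlinarith [mul_pos hsa0 hsb0]
  -- cross-multiplied equation
  have h1 : (sa^2+p)/2 * (sb*sw) = sw^2 * (sa*sm) :=
    (div_eq_div_iff (by positivity) (by positivity)).mp heq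
  have hap : 0 < sa^2 + p := by
    by_contra hle
    push_neg at hle
    nlinarith [mul_pos hsb0 hsw0, mul_pos (mul_pos (mul_pos hsw0 hsw0) hsa0) hsm0]
  have h2 : (sa^2+p)/2 * sb = sw * (sa*sm) := by
    have hc : ((sa^2+p)/2 * sb) * sw = (sw * (sa*sm)) * sw := by linear_combination h1
    exact mul_right_cancel₀ (ne_of_gt hsw0) hc
  have h3 : ((sa^2+p)/2 * sb)^2 = (sw*(sa*sm))^2 := by rw [h2]
  have h4 : ((sa^2+p)/2*sb)^2 * sc^2 = (sw^2*sc^2)*(sa^2*sm^2) := by linear_combination sc^2 * h3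
  rw [hsw, hsm] at h4
  have main : (sa^2+p)^2 * sb^2 * (sa^2+sb^2-2*p) = sa^2 * (sa^2+sb^2+2*p) * (sa^2*sb^2 - p^2) := by
    rw [hsc] at h4
    linear_combination 4 * h4
  have hfac : p * (sa^2 - sb^2) * (2*p^2 + p*(sa^2-sb^2) - 2*sa^2*sb^2) = 0 := by
    linear_combination main
  rcases mul_eq_zero.mp hfac with h5 | hG
  · rcases mul_eq_zero.mp h5 with h6 | h7
    · exact Or.inr h6
    · left
      have h8 : (sa - sb) * (sa + sb) = 0 := by linear_combination h7
      rcases mul_eq_zero.mp h8 with h9 | h9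
      · linarith
      · linarith
  · exfalso
    have hab2 : sa^2 ≤ sb^2 := pow_le_pow_left₀ (le_of_lt hsa0) hab' 2
    clear h1 h2 h3 h4 heq hsm hsw hsc hab hfac hab'
    rcases eq_or_lt_of_le hab2 with he | hlt
    · have hz : p * (sa^2 - sb^2) = 0 := by rw [show sa^2 - sb^2 = 0 by linarith]; ring
      linarith
    · rcases le_or_gt 0 p with hp | hp
      · have h5 : 0 ≤ p * (sb^2 - sa^2) := mul_nonneg hp (by linarith)
        linarith
      · have hpa : -p < sa^2 := by linarith
        have h5 : (-p) * (sb^2 - sa^2) < sa^2 * (sb^2 - sa^2) :=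
          mul_lt_mul_of_pos_right hpa (by linarith)
        have hp2 : p^2 < (sa^2)^2 := by nlinarith [hpa, hp]
        nlinarith [h5, hp2, hG, hD]

theorem stmt_14 (A B C H M : EuclideanSpace ℝ (Fin 2))
    (hABC : ¬ Collinear ℝ ({A, B, C} : Set (EuclideanSpace ℝ (Fin 2))))
    (hH : H = EuclideanGeometry.orthogonalProjection (affineSpan ℝ {A, B}) C)
    (hM : M = midpoint ℝ A B)
    (hab : ∠ C A B ≥ ∠ C B A)
    (h : ∠ A C M = ∠ B C H) :
    dist A C = dist B C ∨ ∠ A C B = π / 2 := by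
  have hAB : A ≠ B := by
    rintro rfl
    exact hABC ((collinear_pair ℝ A C).subset (by intro x hx; simp at hx ⊢; tauto))
  have hAC : A ≠ C := by
    rintro rfl
    exact hABC ((collinear_pair ℝ A B).subset (by intro x hx; simp at hx ⊢; tauto))
  have hBC : B ≠ C := by
    rintro rfl
    exact hABC ((collinear_pair ℝ A B).subset (by intro x hx; simp at hx ⊢; tauto))
  have hC : C ∉ affineSpan ℝ ({A, B} : Set (EuclideanSpace ℝ (Fin 2))) := by
    intro hc
    apply hABC
    have h1 : Collinear ℝ ({C, A, B} : Set (EuclideanSpace ℝ (Fin 2))) :=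
      collinear_insert_of_mem_affineSpan_pair hc
    have : ({A, B, C} : Set (EuclideanSpace ℝ (Fin 2))) = {C, A, B} := by
      ext x; simp; tauto
    rw [this]; exact h1
  have hHs : H ∈ affineSpan ℝ ({A, B} : Set (EuclideanSpace ℝ (Fin 2))) := by
    rw [hH]; exact EuclideanGeometry.orthogonalProjection_mem C
  have hHC : H ≠ C := by
    intro he
    exact hC (EuclideanGeometry.orthogonalProjection_eq_self_iff.mp (he ▸ hH).symm)
  have hMC : M ≠ C := by
    intro he
    apply hC
    rw [← he, hM, ← lineMap_one_half]
    exact AffineMap.lineMap_mem_affineSpan_pair _ _ _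
  have hperp : C -ᵥ H ∈ (affineSpan ℝ ({A, B} : Set (EuclideanSpace ℝ (Fin 2)))).directionᗮ := by
    rw [hH]
    exact EuclideanGeometry.vsub_orthogonalProjection_mem_direction_orthogonal _ C
  have horthBA : ⟪B - A, H - C⟫ = 0 := by
    have hBA : B -ᵥ A ∈ (affineSpan ℝ ({A, B} : Set (EuclideanSpace ℝ (Fin 2)))).direction :=
      AffineSubspace.vsub_mem_direction (right_mem_affineSpan_pair ℝ A B)
        (left_mem_affineSpan_pair ℝ A B)
    have h0 := Submodule.inner_right_of_mem_orthogonal hBA hperp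
    simp only [vsub_eq_sub] at h0
    have h1 : (H : EuclideanSpace ℝ (Fin 2)) - C = -(C - H) := by abel
    rw [h1, inner_neg_right, h0, neg_zero]
  -- parametrize H on the line
  obtain ⟨t, ht⟩ : ∃ t : ℝ, t • (A -ᵥ B) = H -ᵥ A := by
    have ht0 : H -ᵥ A ∈ (affineSpan ℝ ({A, B} : Set (EuclideanSpace ℝ (Fin 2)))).direction :=
      AffineSubspace.vsub_mem_direction hHs (left_mem_affineSpan_pair ℝ A B)
    rw [direction_affineSpan, vectorSpan_pair] at ht0
    exact Submodule.mem_span_singleton.mp ht0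
  have hwe : H - C = (A - C) - t • (B - A) := by
    have ht' : H - A = t • (A - B) := by
      simp only [vsub_eq_sub] at ht; exact ht.symm
    have : H - C = (H - A) + (A - C) := by abel
    rw [this, ht']
    module
  have hmv : M - C = (2⁻¹ : ℝ) • ((A - C) + (B - C)) := by
    rw [hM, midpoint_eq_smul_add, invOf_eq_inv]
    module
  -- positivity of norms
  have hsa0 : (0:ℝ) < ‖A - C‖ := norm_pos_iff.mpr (sub_ne_zero.mpr hAC)
  have hsb0 : (0:ℝ) < ‖B - C‖ := norm_pos_iff.mpr (sub_ne_zero.mpr hBC)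
  have hsc0 : (0:ℝ) < ‖B - A‖ := norm_pos_iff.mpr (sub_ne_zero.mpr hAB.symm)
  have hsm0 : (0:ℝ) < ‖M - C‖ := norm_pos_iff.mpr (sub_ne_zero.mpr hMC)
  have hsw0 : (0:ℝ) < ‖H - C‖ := norm_pos_iff.mpr (sub_ne_zero.mpr hHC)
  have e0 : (B - A : EuclideanSpace ℝ (Fin 2)) = (B - C) - (A - C) := by abel
  have hsc : ‖B - A‖^2 = ‖A - C‖^2 + ‖B - C‖^2 - 2*⟪A - C, B - C⟫ := by
    rw [e0, norm_sub_sq_real, real_inner_comm]; ring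
  have hsm2 : ‖M - C‖^2 = (‖A - C‖^2 + ‖B - C‖^2 + 2*⟪A - C, B - C⟫)/4 := by
    rw [hmv, norm_smul, mul_pow, norm_add_sq_real, Real.norm_eq_abs,
      abs_of_pos (by norm_num : (0:ℝ) < 2⁻¹)]
    ring
  have hum : ⟪A - C, M - C⟫ = (‖A - C‖^2 + ⟪A - C, B - C⟫)/2 := by
    rw [hmv, real_inner_smul_right, inner_add_right, real_inner_self_eq_norm_sq]; ring
  have hBAAC : ⟪B - A, A - C⟫ = ⟪A - C, B - C⟫ - ‖A - C‖^2 := by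
    rw [e0, inner_sub_left, real_inner_self_eq_norm_sq, real_inner_comm (B - C) (A - C)]
  have htq : t * ‖B - A‖^2 = ⟪A - C, B - C⟫ - ‖A - C‖^2 := by
    have h2 : ⟪B - A, H - C⟫ =
        (⟪A - C, B - C⟫ - ‖A - C‖^2) - t * ‖B - A‖^2 := by
      rw [hwe, inner_sub_right, real_inner_smul_right, real_inner_self_eq_norm_sq, hBAAC]
    rw [horthBA] at h2
    linarith
  have hww : ‖H - C‖^2 = ⟪A - C, H - C⟫ := by
    have hx : (A - C) - (H - C) = t • (B - A) := by rw [hwe]; abel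
    have h9 : ⟪(A - C) - (H - C), H - C⟫ = (0:ℝ) := by
      rw [hx, real_inner_smul_left, horthBA, mul_zero]
    rw [inner_sub_left] at h9
    rw [← real_inner_self_eq_norm_sq]
    linarith [h9]
  have huw : ⟪A - C, H - C⟫ = ‖A - C‖^2 - t*(⟪A - C, B - C⟫ - ‖A - C‖^2) := by
    have e1 : ⟪A - C, B - A⟫ = ⟪A - C, B - C⟫ - ‖A - C‖^2 := by
      rw [e0, inner_sub_right, real_inner_self_eq_norm_sq]
    rw [hwe, inner_sub_right, real_inner_smul_right, real_inner_self_eq_norm_sq, e1]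
  have hW : ‖H - C‖^2 = ‖A - C‖^2 - t*(⟪A - C, B - C⟫ - ‖A - C‖^2) := hww.trans huw
  have hswkey : ‖H - C‖^2 * ‖B - A‖^2 = ‖A - C‖^2*‖B - C‖^2 - ⟪A - C, B - C⟫^2 := by
    linear_combination ‖B - A‖^2 * hW - (⟪A - C, B - C⟫ - ‖A - C‖^2) * htq + ‖A - C‖^2 * hsc
  have hvw : ⟪B - C, H - C⟫ = ‖H - C‖^2 := by
    have e1 : (B - C : EuclideanSpace ℝ (Fin 2)) = (B - A) + (A - C) := by abel
    rw [e1, inner_add_left, horthBA, zero_add, hww]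
  -- cosine of the angle equality
  have hcos := congrArg Real.cos h
  have hACM : ∠ A C M = InnerProductGeometry.angle (A - C) (M - C) := rfl
  have hBCH : ∠ B C H = InnerProductGeometry.angle (B - C) (H - C) := rfl
  rw [hACM, hBCH, InnerProductGeometry.cos_angle, InnerProductGeometry.cos_angle,
    hum, hvw] at hcos
  -- cosine of the angle inequality
  have hcosab : Real.cos (∠ C A B) ≤ Real.cos (∠ C B A) :=
    Real.cos_le_cos_of_nonneg_of_le_pi (EuclideanGeometry.angle_nonneg C B A)
      (EuclideanGeometry.angle_le_pi C A B) hab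
  have h1 : ∠ C A B = InnerProductGeometry.angle (C - A) (B - A) := rfl
  have h2 : ∠ C B A = InnerProductGeometry.angle (C - B) (A - B) := rfl
  have e2 : ⟪C - A, B - A⟫ = ‖A - C‖^2 - ⟪A - C, B - C⟫ := by
    have e4 : (C - A : EuclideanSpace ℝ (Fin 2)) = -(A - C) := by abel
    have e5 : ⟪A - C, B - A⟫ = ⟪A - C, B - C⟫ - ‖A - C‖^2 := by
      rw [e0, inner_sub_right, real_inner_self_eq_norm_sq]
    rw [e4, inner_neg_left, e5]; ring
  have e3 : ⟪C - B, A - B⟫ = ‖B - C‖^2 - ⟪A - C, B - C⟫ := by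
    have e4 : (C - B : EuclideanSpace ℝ (Fin 2)) = -(B - C) := by abel
    have e5 : (A - B : EuclideanSpace ℝ (Fin 2)) = (A - C) - (B - C) := by abel
    rw [e4, e5, inner_neg_left, inner_sub_right, real_inner_self_eq_norm_sq,
      real_inner_comm (B - C) (A - C)]; ring
  rw [h1, h2, InnerProductGeometry.cos_angle, InnerProductGeometry.cos_angle,
    e2, e3, norm_sub_rev C A, norm_sub_rev C B, norm_sub_rev A B] at hcosab
  -- apply the algebraic lemma
  rcases alg14 ⟪A - C, B - C⟫ ‖A - C‖ ‖B - C‖ ‖B - A‖ ‖M - C‖ ‖H - C‖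
      hsa0 hsb0 hsc0 hsm0 hsw0 hsm2 hswkey hsc hcosab hcos with h4 | h4
  · left
    rw [dist_eq_norm, dist_eq_norm]
    exact h4
  · right
    have h5 : ∠ A C B = InnerProductGeometry.angle (A - C) (B - C) := rfl
    rw [h5]
    exact (InnerProductGeometry.inner_eq_zero_iff_angle_eq_pi_div_two _ _).mp h4
end

section
/- Let A, B, C be a triangle, F, D, E the midpoints of sides BC, CA, AB respectively, and G the circumcenter of triangle FDE. If ∠ACB = π/3, then G lies on the internal bisector of angle ACB, i.e., G ≠ C, ∠ACG = ∠GCB, and ∠ACG + ∠GCB = ∠ACB. -/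
open EuclideanGeometry Real RealInnerProductSpace

set_option maxHeartbeats 1000000 in
theorem stmt_16 (A B C F D E G : EuclideanSpace ℝ (Fin 2))
    (hABC : ¬ Collinear ℝ ({A, B, C} : Set (EuclideanSpace ℝ (Fin 2))))
    (hF : F = midpoint ℝ B C) (hD : D = midpoint ℝ C A) (hE : E = midpoint ℝ A B)
    (hG₁ : dist G F = dist G D) (hG₂ : dist G D = dist G E)
    (h : ∠ A C B = π / 3) :
    G ≠ C ∧ ∠ A C G = ∠ G C B ∧ ∠ A C G + ∠ G C B = ∠ A C B := by
  have hAC : A ≠ C := by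
    rintro rfl
    refine hABC ?_
    have : ({A, B, A} : Set (EuclideanSpace ℝ (Fin 2))) = {A, B} := by
      ext x; simp only [Set.mem_insert_iff, Set.mem_singleton_iff]; tauto
    rw [this]
    exact collinear_pair ℝ A B
  have hBC : B ≠ C := by
    rintro rfl
    refine hABC ?_
    have : ({A, B, B} : Set (EuclideanSpace ℝ (Fin 2))) = {A, B} := by
      ext x; simp only [Set.mem_insert_iff, Set.mem_singleton_iff]; tauto
    rw [this]
    exact collinear_pair ℝ A B
  subst hF hD hE
  set u : EuclideanSpace ℝ (Fin 2) := A - C with hu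
  set v : EuclideanSpace ℝ (Fin 2) := B - C with hv
  set w : EuclideanSpace ℝ (Fin 2) := G - C with hw
  have hu0 : u ≠ 0 := sub_ne_zero.2 hAC
  have hv0 : v ≠ 0 := sub_ne_zero.2 hBC
  set p : ℝ := ‖u‖ with hpdef
  set q : ℝ := ‖v‖ with hqdef
  have hp : 0 < p := norm_pos_iff.2 hu0
  have hq : 0 < q := norm_pos_iff.2 hv0
  -- angle hypothesis gives the inner product of u and v
  have hangle : InnerProductGeometry.angle u v = π / 3 := by
    rw [EuclideanGeometry.angle] at h
    simpa [vsub_eq_sub] using h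
  have huv : ⟪u, v⟫ = p * q / 2 := by
    have hc := InnerProductGeometry.cos_angle u v
    rw [hangle, Real.cos_pi_div_three] at hc
    rw [eq_comm, div_eq_iff (by positivity : (0:ℝ) < ‖u‖ * ‖v‖).ne'] at hc
    rw [hc]; ring
  have hvu : ⟪v, u⟫ = p * q / 2 := (real_inner_comm u v).trans huv
  have hpq : (0:ℝ) < p + q := by linarith
  -- rewrite the two distance hypotheses as inner product identities
  have hGF : G - midpoint ℝ B C = w - (2⁻¹ : ℝ) • v := by
    rw [midpoint_eq_smul_add, invOf_eq_inv, hw, hv]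
    module
  have hGD : G - midpoint ℝ C A = w - (2⁻¹ : ℝ) • u := by
    rw [midpoint_eq_smul_add, invOf_eq_inv, hw, hu]
    module
  have hGE : G - midpoint ℝ A B = w - (2⁻¹ : ℝ) • (u + v) := by
    rw [midpoint_eq_smul_add, invOf_eq_inv, hw, hu, hv]
    module
  have hsq₁ : ‖w - (2⁻¹ : ℝ) • v‖ ^ 2 = ‖w - (2⁻¹ : ℝ) • u‖ ^ 2 := by
    rw [← hGF, ← hGD, ← dist_eq_norm, ← dist_eq_norm, hG₁]
  have hsq₂ : ‖w - (2⁻¹ : ℝ) • u‖ ^ 2 = ‖w - (2⁻¹ : ℝ) • (u + v)‖ ^ 2 := by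
    rw [← hGD, ← hGE, ← dist_eq_norm, ← dist_eq_norm, hG₂]
  have hexp₁ : ⟪w, u⟫ - ⟪w, v⟫ = (p ^ 2 - q ^ 2) / 4 := by
    rw [← real_inner_self_eq_norm_sq, ← real_inner_self_eq_norm_sq] at hsq₁
    simp only [inner_sub_left, inner_sub_right, real_inner_smul_left,
      real_inner_smul_right] at hsq₁
    simp only [real_inner_self_eq_norm_sq, real_inner_comm w u,
      real_inner_comm w v, ← hpdef, ← hqdef] at hsq₁
    linarith [hsq₁]
  have hexp₂ : ⟪w, v⟫ = (q ^ 2 + p * q) / 4 := by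
    rw [← real_inner_self_eq_norm_sq, ← real_inner_self_eq_norm_sq] at hsq₂
    simp only [inner_sub_left, inner_sub_right, inner_add_left, inner_add_right,
      real_inner_smul_left, real_inner_smul_right] at hsq₂
    simp only [real_inner_self_eq_norm_sq, real_inner_comm w u, real_inner_comm w v,
      real_inner_comm u v, ← hpdef, ← hqdef] at hsq₂
    linarith [hsq₂, huv, hvu]
  have hwu : ⟪w, u⟫ = (p ^ 2 + p * q) / 4 := by linarith [hexp₁, hexp₂]
  -- the candidate vector along the bisector
  set α : ℝ := (p + q) / (6 * p) with hα
  set β : ℝ := (p + q) / (6 * q) with hβ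
  set w₀ : EuclideanSpace ℝ (Fin 2) := α • u + β • v with hw₀
  have hxu : ⟪w - w₀, u⟫ = 0 := by
    rw [inner_sub_left, hw₀, inner_add_left, real_inner_smul_left, real_inner_smul_left,
      real_inner_self_eq_norm_sq, ← hpdef, hwu, hvu, hα, hβ]
    field_simp
    ring
  have hxv : ⟪w - w₀, v⟫ = 0 := by
    rw [inner_sub_left, hw₀, inner_add_left, real_inner_smul_left, real_inner_smul_left,
      real_inner_self_eq_norm_sq, ← hqdef, hexp₂, huv, hα, hβ]
    field_simp
    ring
  -- u and v are linearly independent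
  have hind : LinearIndependent ℝ ![u, v] := by
    rw [LinearIndependent.pair_iff]
    intro s t hst
    by_cases hs : s = 0
    · subst hs
      simp only [zero_smul, zero_add] at hst
      rcases smul_eq_zero.1 hst with ht | hv' 
      · exact ⟨rfl, ht⟩
      · exact absurd hv' hv0
    · exfalso
      apply hABC
      rw [collinear_iff_of_mem (show C ∈ ({A, B, C} : Set (EuclideanSpace ℝ (Fin 2))) by simp)]
      refine ⟨v, ?_⟩
      intro x hx
      rcases hx with rfl | rfl | rfl
      · refine ⟨s⁻¹ * (-t), ?_⟩
        have h1 : s • u = (-t) • v := by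
          rw [neg_smul]; exact eq_neg_of_add_eq_zero_left hst
        have h2 : u = (s⁻¹ * (-t)) • v := by
          rw [← smul_smul, ← h1, smul_smul, inv_mul_cancel₀ hs, one_smul]
        rw [vadd_eq_add, ← h2, hu]
        abel
      · exact ⟨1, by rw [vadd_eq_add, one_smul, hv]; abel⟩
      · exact ⟨0, by rw [vadd_eq_add, zero_smul, zero_add]⟩
  -- span of u, v is the whole plane
  have hspan : Submodule.span ℝ ({u, v} : Set (EuclideanSpace ℝ (Fin 2))) = ⊤ := by
    have hr : Set.range ![u, v] = {u, v} := by
      ext x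
      simp only [Matrix.range_cons, Matrix.range_empty, Set.union_empty, Set.union_singleton,
        Set.mem_insert_iff, Set.mem_singleton_iff]
      tauto
    apply Submodule.eq_top_of_finrank_eq
    rw [← hr, finrank_span_eq_card hind]
    simp [finrank_euclideanSpace_fin]
  -- hence w = w₀
  have hww₀ : w = w₀ := by
    have hmem : w - w₀ ∈ Submodule.span ℝ ({u, v} : Set (EuclideanSpace ℝ (Fin 2))) := by
      rw [hspan]; trivial
    obtain ⟨a, b, hab⟩ := Submodule.mem_span_pair.1 hmem
    have : ⟪w - w₀, w - w₀⟫ = 0 := by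
      nth_rewrite 2 [← hab]
      rw [inner_add_right, real_inner_smul_right, real_inner_smul_right, hxu, hxv]
      ring
    rw [inner_self_eq_zero] at this
    exact sub_eq_zero.1 this
  -- norm of w
  have hwnsq : ‖w‖ ^ 2 = (p + q) ^ 2 / 12 := by
    have hinner : ⟪w, w⟫ = α * ((p ^ 2 + p * q) / 4) + β * ((q ^ 2 + p * q) / 4) := by
      nth_rewrite 2 [hww₀]
      rw [hw₀, inner_add_right, real_inner_smul_right, real_inner_smul_right, hwu, hexp₂]
    rw [← real_inner_self_eq_norm_sq, hinner, hα, hβ]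
    field_simp
    ring
  set s3 : ℝ := Real.sqrt 3 with hs3
  have hs3sq : s3 ^ 2 = 3 := Real.sq_sqrt (by norm_num)
  have hs3pos : 0 < s3 := Real.sqrt_pos.2 (by norm_num)
  have hwn : ‖w‖ = (p + q) * s3 / 6 := by
    have h2 : ((p + q) * s3 / 6) ^ 2 = (p + q) ^ 2 / 12 := by
      rw [div_pow, mul_pow, hs3sq]; ring
    calc ‖w‖ = Real.sqrt (‖w‖ ^ 2) := (Real.sqrt_sq (norm_nonneg w)).symm
      _ = Real.sqrt (((p + q) * s3 / 6) ^ 2) := by rw [hwnsq, h2]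
      _ = (p + q) * s3 / 6 := Real.sqrt_sq (by positivity)
  have hwnpos : (0:ℝ) < (p + q) * s3 / 6 := by positivity
  have hG : G ≠ C := by
    intro hGC
    have h0 : w = 0 := by rw [hw, hGC, sub_self]
    have h1 : ‖w‖ = 0 := by rw [h0, norm_zero]
    rw [hwn] at h1
    linarith
  -- compute the two angles
  have hACG : ∠ A C G = π / 6 := by
    have e1 : ∠ A C G = InnerProductGeometry.angle u w := rfl
    have e2 : InnerProductGeometry.angle u w = Real.arccos (⟪u, w⟫ / (‖u‖ * ‖w‖)) := rfl
    have harg : ⟪u, w⟫ / (‖u‖ * ‖w‖) = s3 / 2 := by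
      rw [real_inner_comm w u, hwu, ← hpdef, hwn,
        div_eq_iff (mul_pos hp hwnpos).ne']
      linear_combination (-(p * (p + q)) / 12) * hs3sq
    rw [e1, e2, harg, ← Real.cos_pi_div_six,
      Real.arccos_cos (by positivity) (by linarith [Real.pi_pos])]
  have hGCB : ∠ G C B = π / 6 := by
    have e1 : ∠ G C B = InnerProductGeometry.angle w v := rfl
    have e2 : InnerProductGeometry.angle w v = Real.arccos (⟪w, v⟫ / (‖w‖ * ‖v‖)) := rfl
    have harg : ⟪w, v⟫ / (‖w‖ * ‖v‖) = s3 / 2 := by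
      rw [hexp₂, ← hqdef, hwn, div_eq_iff (mul_pos hwnpos hq).ne']
      linear_combination (-(q * (p + q)) / 12) * hs3sq
    rw [e1, e2, harg, ← Real.cos_pi_div_six,
      Real.arccos_cos (by positivity) (by linarith [Real.pi_pos])]
  refine ⟨hG, by rw [hACG, hGCB], by rw [hACG, hGCB, h]; ring⟩
end

section
/- Let A, B, C be a triangle, F, D, E the midpoints of sides BC, CA, AB respectively, and G the circumcenter of triangle FDE. If G lies on the internal bisector of angle ACB (G ≠ C, ∠ACG = ∠GCB, and ∠ACG + ∠GCB = ∠ACB), then dist A C = dist B C or ∠ACB = π/3. -/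
/-!
Put the origin at `C` and write `u = A - C`, `v = B - C`, `w = G - C`. Since `F`, `D`, `E` are
`v/2`, `u/2`, `(u+v)/2`, equidistance of `G` from them is linear in `w`:
`4⟪w, u⟫ - 4⟪w, v⟫ = ‖u‖² - ‖v‖²` and `4⟪w, v⟫ = ‖v‖² + 2⟪u, v⟫`, while equal angles at `C`
give `‖v‖⟪w, u⟫ = ‖u‖⟪w, v⟫`. If `‖u‖ ≠ ‖v‖`, eliminating `w` leaves `⟪u, v⟫ = ‖u‖‖v‖/2`,
i.e. `cos ∠ACB = 1/2`.
-/

open EuclideanGeometry Real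

open RealInnerProductSpace

section

variable {V P : Type*} [NormedAddCommGroup V] [InnerProductSpace ℝ V] [MetricSpace P]
  [NormedAddTorsor V P]

theorem two_inner_sub_two_inner_eq_of_dist_eq {c p₁ p₂ : P} (o : P) (h : dist c p₁ = dist c p₂) :
    2 * ⟪c -ᵥ o, p₂ -ᵥ o⟫ - 2 * ⟪c -ᵥ o, p₁ -ᵥ o⟫ = ‖p₂ -ᵥ o‖ ^ 2 - ‖p₁ -ᵥ o‖ ^ 2 := by
  rw [dist_eq_norm_vsub V, dist_eq_norm_vsub V, ← vsub_sub_vsub_cancel_right c p₁ o,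
    ← vsub_sub_vsub_cancel_right c p₂ o] at h
  have := congrArg (· ^ 2) h
  simp only [norm_sub_sq_real] at this
  linarith

theorem norm_mul_inner_eq_of_angle_eq {u v w : V}
    (h : InnerProductGeometry.angle u w = InnerProductGeometry.angle w v) :
    ‖v‖ * ⟪w, u⟫ = ‖u‖ * ⟪w, v⟫ := by
  rcases eq_or_ne u 0 with rfl | hu
  · simp
  rcases eq_or_ne v 0 with rfl | hv
  · simp
  rcases eq_or_ne w 0 with rfl | hw
  · simp
  have hcos := congrArg cos h
  rw [InnerProductGeometry.cos_angle, InnerProductGeometry.cos_angle, real_inner_comm w u] at hcos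
  field_simp at hcos
  linear_combination hcos

theorem angle_eq_pi_div_three_of_inner_eq {u v : V} (hu : u ≠ 0) (hv : v ≠ 0)
    (h : ⟪u, v⟫ = ‖u‖ * ‖v‖ / 2) : InnerProductGeometry.angle u v = π / 3 := by
  have hnorm : ‖u‖ * ‖v‖ ≠ 0 := by positivity
  rw [InnerProductGeometry.angle, h, div_right_comm, div_self hnorm,
    ← cos_pi_div_three, arccos_cos] <;> linarith [pi_pos]

end

theorem stmt_17_general (A B C F D E G : EuclideanSpace ℝ (Fin 2))
    (hABC : ¬ Collinear ℝ ({A, B, C} : Set (EuclideanSpace ℝ (Fin 2))))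
    (hF : F = midpoint ℝ B C) (hD : D = midpoint ℝ C A) (hE : E = midpoint ℝ A B)
    (hG₁ : dist G F = dist G D) (hG₂ : dist G D = dist G E)
    (h1 : ∠ A C G = ∠ G C B) :
    dist A C = dist B C ∨ ∠ A C B = π / 3 := by
  have hu : A -ᵥ C ≠ 0 := vsub_ne_zero.2 (ne₁₃_of_not_collinear hABC)
  have hv : B -ᵥ C ≠ 0 := vsub_ne_zero.2 (ne₂₃_of_not_collinear hABC)
  have hFD := two_inner_sub_two_inner_eq_of_dist_eq C hG₁
  have hDE := two_inner_sub_two_inner_eq_of_dist_eq C hG₂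
  have hFC : F -ᵥ C = (2⁻¹ : ℝ) • (B -ᵥ C) := by rw [hF, midpoint_vsub_right, invOf_eq_inv]
  have hDC : D -ᵥ C = (2⁻¹ : ℝ) • (A -ᵥ C) := by rw [hD, midpoint_vsub_left, invOf_eq_inv]
  have hEC : E -ᵥ C = (2⁻¹ : ℝ) • ((A -ᵥ C) + (B -ᵥ C)) := by
    rw [hE, midpoint_vsub, invOf_eq_inv, smul_add]
  have hangle := norm_mul_inner_eq_of_angle_eq h1
  rw [dist_eq_norm_vsub, dist_eq_norm_vsub]
  set u := A -ᵥ C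
  set v := B -ᵥ C
  set w := G -ᵥ C
  rw [hFC, hDC] at hFD
  rw [hDC, hEC] at hDE
  simp only [inner_smul_right, inner_add_right, norm_smul, norm_inv, Real.norm_ofNat, mul_pow,
    norm_add_sq_real] at hFD hDE
  by_cases huv : ‖u‖ = ‖v‖
  · exact Or.inl huv
  right
  have hq : ⟪w, v⟫ = ‖v‖ * (‖u‖ + ‖v‖) / 4 := by
    refine mul_left_cancel₀ (sub_ne_zero.2 huv) ?_
    linear_combination ‖v‖ * hFD - hangle
  refine angle_eq_pi_div_three_of_inner_eq hu hv ?_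
  linear_combination 2 * hq - 2 * hDE

theorem stmt_17 (A B C F D E G : EuclideanSpace ℝ (Fin 2))
    (hABC : ¬ Collinear ℝ ({A, B, C} : Set (EuclideanSpace ℝ (Fin 2))))
    (hF : F = midpoint ℝ B C) (hD : D = midpoint ℝ C A) (hE : E = midpoint ℝ A B)
    (hG₁ : dist G F = dist G D) (hG₂ : dist G D = dist G E)
    (hGC : G ≠ C) (h1 : ∠ A C G = ∠ G C B) (h2 : ∠ A C G + ∠ G C B = ∠ A C B) :
    dist A C = dist B C ∨ ∠ A C B = π / 3 :=
  stmt_17_general A B C F D E G hABC hF hD hE hG₁ hG₂ h1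
end

section
/- Let A, B, C be a triangle, F, D, E the midpoints of sides BC, CA, AB respectively, and G the circumcenter of triangle FDE. If G lies on the internal bisector of angle ACB (G ≠ C, ∠ACG = ∠GCB, and ∠ACG + ∠GCB = ∠ACB) and dist B C ≠ dist A C, then ∠ACB = π/3. -/
/-!
Put the origin at `C` and write `a = A - C`, `b = B - C`, `g = G - C`. Since `G` is equidistant
from `a/2`, `b/2` and `(a + b)/2`, the inner products `4⟪g, a⟫ = ‖a‖² + 2⟪a, b⟫` and
`4⟪g, b⟫ = ‖b‖² + 2⟪a, b⟫` are determined by the triangle, while the bisector condition reads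
`⟪g, a⟫ ‖b‖ = ⟪g, b⟫ ‖a‖`. Together these give `(‖a‖ - ‖b‖)(‖a‖ ‖b‖ - 2⟪a, b⟫) = 0`, and
`‖a‖ ≠ ‖b‖` forces `cos ∠ACB = 1/2`.
-/

open EuclideanGeometry Real
open scoped RealInnerProductSpace

namespace InnerProductGeometry

variable {V : Type*} [NormedAddCommGroup V] [InnerProductSpace ℝ V]

theorem inner_mul_norm_eq_of_angle_eq {a b g : V} (h : angle a g = angle g b) :
    ⟪g, a⟫ * ‖b‖ = ⟪g, b⟫ * ‖a‖ := by
  rcases eq_or_ne a 0 with rfl | ha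
  · simp
  rcases eq_or_ne b 0 with rfl | hb
  · simp
  rcases eq_or_ne g 0 with rfl | hg
  · simp
  have hcos := congrArg Real.cos h
  rw [cos_angle, cos_angle, real_inner_comm g a,
    div_eq_div_iff (by positivity) (by positivity)] at hcos
  exact mul_right_cancel₀ (norm_ne_zero_iff.2 hg) (by linear_combination hcos)

theorem norm_sub_inv_two_smul_sq (g x : V) :
    ‖g - (2⁻¹ : ℝ) • x‖ ^ 2 = ‖g‖ ^ 2 - ⟪g, x⟫ + ‖x‖ ^ 2 / 4 := by
  rw [norm_sub_sq_real, inner_smul_right, norm_smul, Real.norm_eq_abs,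
    abs_of_pos (by norm_num : (0 : ℝ) < 2⁻¹)]
  ring

theorem two_inner_eq_norm_mul_norm_of_equidistant_of_angle_eq {a b g : V}
    (h₁ : ‖g - (2⁻¹ : ℝ) • b‖ = ‖g - (2⁻¹ : ℝ) • a‖)
    (h₂ : ‖g - (2⁻¹ : ℝ) • a‖ = ‖g - (2⁻¹ : ℝ) • (a + b)‖)
    (hbis : angle a g = angle g b) (hne : ‖b‖ ≠ ‖a‖) :
    2 * ⟪a, b⟫ = ‖a‖ * ‖b‖ := by
  have sq₁ := congrArg (· ^ 2) h₁
  have sq₂ := congrArg (· ^ 2) h₂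
  simp only [norm_sub_inv_two_smul_sq, inner_add_right, norm_add_sq_real] at sq₁ sq₂
  have hga : 4 * ⟪g, a⟫ = ‖a‖ ^ 2 + 2 * ⟪a, b⟫ := by linarith
  have hgb : 4 * ⟪g, b⟫ = ‖b‖ ^ 2 + 2 * ⟪a, b⟫ := by linarith
  have hkey := inner_mul_norm_eq_of_angle_eq hbis
  have hfactor : (‖b‖ - ‖a‖) * (‖a‖ * ‖b‖ - 2 * ⟪a, b⟫) = 0 := by
    linear_combination ‖b‖ * hga - ‖a‖ * hgb - 4 * hkey
  rcases mul_eq_zero.mp hfactor with h | h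
  · exact absurd (sub_eq_zero.mp h) hne
  · linarith

theorem angle_eq_pi_div_three_of_two_inner_eq {a b : V} (ha : a ≠ 0) (hb : b ≠ 0)
    (h : 2 * ⟪a, b⟫ = ‖a‖ * ‖b‖) : angle a b = π / 3 := by
  have hcos : Real.cos (angle a b) = Real.cos (π / 3) := by
    rw [cos_angle, cos_pi_div_three, div_eq_iff (by positivity)]
    linarith
  exact injOn_cos ⟨angle_nonneg a b, angle_le_pi a b⟩
    ⟨by positivity, by linarith [pi_pos]⟩ hcos

end InnerProductGeometry

theorem dist_midpoint_eq_norm_vsub {V P : Type*} [NormedAddCommGroup V] [InnerProductSpace ℝ V]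
    [MetricSpace P] [NormedAddTorsor V P] (G X Y C : P) :
    dist G (midpoint ℝ X Y) = ‖(G -ᵥ C) - (2⁻¹ : ℝ) • ((X -ᵥ C) + (Y -ᵥ C))‖ := by
  rw [dist_eq_norm_vsub V, ← vsub_sub_vsub_cancel_right G _ C, midpoint_vsub, invOf_eq_inv,
    smul_add]

theorem stmt_18_general (A B C F D E G : EuclideanSpace ℝ (Fin 2))
    (hABC : ¬ Collinear ℝ ({A, B, C} : Set (EuclideanSpace ℝ (Fin 2))))
    (hF : F = midpoint ℝ B C) (hD : D = midpoint ℝ C A) (hE : E = midpoint ℝ A B)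
    (hG₁ : dist G F = dist G D) (hG₂ : dist G D = dist G E)
    (h1 : ∠ A C G = ∠ G C B)
    (hne : dist B C ≠ dist A C) :
    ∠ A C B = π / 3 := by
  subst hF hD hE
  simp only [dist_midpoint_eq_norm_vsub G _ _ C, vsub_self, add_zero, zero_add] at hG₁ hG₂
  rw [dist_eq_norm_vsub, dist_eq_norm_vsub] at hne
  rw [EuclideanGeometry.angle, EuclideanGeometry.angle] at h1
  exact InnerProductGeometry.angle_eq_pi_div_three_of_two_inner_eq
    (vsub_ne_zero.2 (ne₁₃_of_not_collinear hABC)) (vsub_ne_zero.2 (ne₂₃_of_not_collinear hABC))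
    (InnerProductGeometry.two_inner_eq_norm_mul_norm_of_equidistant_of_angle_eq hG₁ hG₂
      h1 hne)

theorem stmt_18 (A B C F D E G : EuclideanSpace ℝ (Fin 2))
    (hABC : ¬ Collinear ℝ ({A, B, C} : Set (EuclideanSpace ℝ (Fin 2))))
    (hF : F = midpoint ℝ B C) (hD : D = midpoint ℝ C A) (hE : E = midpoint ℝ A B)
    (hG₁ : dist G F = dist G D) (hG₂ : dist G D = dist G E)
    (hGC : G ≠ C) (h1 : ∠ A C G = ∠ G C B) (h2 : ∠ A C G + ∠ G C B = ∠ A C B)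
    (hne : dist B C ≠ dist A C) :
    ∠ A C B = π / 3 :=
  stmt_18_general A B C F D E G hABC hF hD hE hG₁ hG₂ h1 hne
end
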